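/- arXiv:2412.02150 — 3 statements merged into one kernel-verified Lean document; each statement's English description precedes it below -/
import Mathlib

section
/- Let (W,S) be a Coxeter system, I ⊆ S, and let w ∈ W^I. Then the set of simple reflections lying in the Bruhat interval [1,w] ∩ W^I is exactly S(w) \ I, where S(w) = {s ∈ S | s ≤ w in Bruhat order} is the support of w. -/
set_option linter.unusedSectionVars false
set_option linter.unreachableTactic false
set_option linter.unusedTactic false
set_option linter.unnecessarySimpa false
set_option maxHeartbeats 1000000

open CoxeterSystem List

noncomputable section
open scoped Classical

section Geometric

variable {B : Type*} (M : CoxeterMatrix B)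


def kco (i j : B) : ℝ := - Real.cos (Real.pi / M i j)

def av (i : B) : B →₀ ℝ := Finsupp.single i 1

def bf (i : B) : (B →₀ ℝ) →ₗ[ℝ] ℝ := Finsupp.linearCombination ℝ (kco M i)

def rf (i : B) : Module.End ℝ (B →₀ ℝ) :=
  LinearMap.id - (2 : ℝ) • ((LinearMap.toSpanSingleton ℝ _ (av i)).comp (bf M i))

lemma rf_apply (i : B) (v : B →₀ ℝ) : rf M i v = v - (2 * bf M i v) • av i := by
  simp [rf, LinearMap.toSpanSingleton_apply, smul_smul]

lemma bf_av (i j : B) : bf M i (av j) = kco M i j := by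
  simp [bf, av, Finsupp.linearCombination_single]

lemma kco_symm (i j : B) : kco M i j = kco M j i := by
  rw [kco, kco, M.symmetric]

lemma kco_diag (i : B) : kco M i i = 1 := by
  rw [kco, M.diagonal, Nat.cast_one, div_one, Real.cos_pi, neg_neg]

lemma rf_av_self (i : B) : rf M i (av i) = - av i := by
  rw [rf_apply, bf_av, kco_diag]
  module

lemma rf_av_other (i j : B) : rf M i (av j) = av j - (2 * kco M i j) • av i := by
  rw [rf_apply, bf_av]

lemma rf_fix (i : B) {v : B →₀ ℝ} (h : bf M i v = 0) : rf M i v = v := by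
  rw [rf_apply, h]
  simp

section Dihedral

variable (i i' : B) (hm : 2 ≤ M i i')

/-- normalized sine sequence -/
def Sv (θ : ℝ) (k : ℤ) : ℝ := Real.sin (k * θ) / Real.sin θ

lemma theta_pos (hm : 2 ≤ M i i') : 0 < Real.pi / M i i' := by
  apply div_pos Real.pi_pos
  exact_mod_cast Nat.lt_of_lt_of_le (by norm_num) hm

lemma theta_lt_pi (hm : 2 ≤ M i i') : Real.pi / M i i' < Real.pi := by
  have h2 : (2:ℝ) ≤ (M i i' : ℝ) := by exact_mod_cast hm
  rw [div_lt_iff₀ (by linarith)]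
  nlinarith [Real.pi_pos, mul_pos Real.pi_pos (by linarith : (0:ℝ) < (M i i' : ℝ) - 1)]

lemma sin_theta_pos (hm : 2 ≤ M i i') : 0 < Real.sin (Real.pi / M i i') :=
  Real.sin_pos_of_pos_of_lt_pi (theta_pos M i i' hm) (theta_lt_pi M i i' hm)

lemma Sv_rec (θ : ℝ) (hs : Real.sin θ ≠ 0) (k : ℤ) :
    2 * Real.cos θ * Sv θ k = Sv θ (k+1) + Sv θ (k-1) := by
  have h1 : ((k+1 : ℤ):ℝ) * θ = k*θ + θ := by push_cast; ring
  have h2 : ((k-1 : ℤ):ℝ) * θ = k*θ - θ := by push_cast; ring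
  rw [Sv, Sv, Sv, h1, h2, Real.sin_add, Real.sin_sub]
  field_simp
  ring

end Dihedral

lemma rf_step (i i' : B) (A C : ℝ) :
    (rf M i * rf M i') (A • av i + C • av (i' : B))
      = (-A - 2 * kco M i i' * (-(2 * kco M i i' * A) - C)) • av i
        + (-(2 * kco M i i' * A) - C) • av i' := by
  have e1 : rf M i' (av i) = av i - (2 * kco M i i') • av i' := by
    rw [rf_av_other, kco_symm]
  simp only [Module.End.mul_apply, map_add, map_smul, map_sub, map_neg, e1,
    rf_av_self, rf_av_other]
  module

lemma rf_pow_av (i i' : B) (hm : 2 ≤ M i i') (n : ℕ) :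
    ((rf M i * rf M i')^n) (av i)
        = Sv (Real.pi / M i i') (2*(n:ℤ)+1) • av i
          + Sv (Real.pi / M i i') (2*(n:ℤ)) • av i'
    ∧ ((rf M i * rf M i')^n) (av (i' : B))
        = (- Sv (Real.pi / M i i') (2*(n:ℤ))) • av i
          + (- Sv (Real.pi / M i i') (2*(n:ℤ)-1)) • av i' := by
  set θ := Real.pi / M i i' with hθ
  have hs : Real.sin θ ≠ 0 := ne_of_gt (sin_theta_pos M i i' hm)
  have hc : kco M i i' = - Real.cos θ := rfl
  induction n with
  | zero =>
    have h1 : Sv θ 1 = 1 := by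
      rw [Sv]; push_cast; rw [one_mul, div_self hs]
    have h0 : Sv θ 0 = 0 := by
      rw [Sv]; push_cast; rw [zero_mul, Real.sin_zero, zero_div]
    have hm1 : Sv θ (-1) = -1 := by
      rw [Sv]; push_cast; rw [neg_one_mul, Real.sin_neg, neg_div, div_self hs]
    rw [pow_zero]
    constructor
    · rw [Module.End.one_apply]
      push_cast
      rw [h1, h0]; module
    · rw [Module.End.one_apply]
      push_cast
      rw [h0, hm1]; module
  | succ n ih =>
    obtain ⟨ih1, ih2⟩ := ih
    have hr0 := Sv_rec θ hs (2*(n:ℤ))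
    have hr1 := Sv_rec θ hs (2*(n:ℤ)+1)
    have hr2 := Sv_rec θ hs (2*(n:ℤ)+2)
    have e3 : (2*(n:ℤ)+1+1) = 2*(n:ℤ)+2 := by ring
    have e4 : (2*(n:ℤ)+1-1) = 2*(n:ℤ) := by ring
    have e5 : (2*(n:ℤ)+2+1) = 2*(n:ℤ)+3 := by ring
    have e6 : (2*(n:ℤ)+2-1) = 2*(n:ℤ)+1 := by ring
    rw [e3, e4] at hr1
    rw [e5, e6] at hr2
    have pow_eq : ((rf M i * rf M i')^(n+1) : Module.End ℝ (B →₀ ℝ))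
        = (rf M i * rf M i') * (rf M i * rf M i')^n := pow_succ' _ _
    have hcast : ((n+1 : ℕ) : ℤ) = (n:ℤ)+1 := by push_cast; ring
    have cB : -(2 * kco M i i' * Sv θ (2*(n:ℤ)+1)) - Sv θ (2*(n:ℤ))
        = Sv θ (2*((n:ℤ)+1)) := by
      rw [hc, (by ring : (2*((n:ℤ)+1)) = 2*(n:ℤ)+2)]
      linear_combination hr1
    have cA : -(Sv θ (2*(n:ℤ)+1))
          - 2 * kco M i i' * (-(2 * kco M i i' * Sv θ (2*(n:ℤ)+1)) - Sv θ (2*(n:ℤ)))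
        = Sv θ (2*((n:ℤ)+1)+1) := by
      rw [hc, (by ring : (2*((n:ℤ)+1)+1) = 2*(n:ℤ)+3)]
      linear_combination 2 * Real.cos θ * hr1 + hr2
    have cB' : -(2 * kco M i i' * (- Sv θ (2*(n:ℤ)))) - (- Sv θ (2*(n:ℤ)-1))
        = - Sv θ (2*((n:ℤ)+1)-1) := by
      rw [hc, (by ring : (2*((n:ℤ)+1)-1) = 2*(n:ℤ)+1)]
      linear_combination - hr0
    have cA' : -(- Sv θ (2*(n:ℤ)))
          - 2 * kco M i i' * (-(2 * kco M i i' * (- Sv θ (2*(n:ℤ)))) - (- Sv θ (2*(n:ℤ)-1)))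
        = - Sv θ (2*((n:ℤ)+1)) := by
      rw [hc, (by ring : (2*((n:ℤ)+1)) = 2*(n:ℤ)+2)]
      linear_combination - hr1 - 2*Real.cos θ * hr0
    constructor
    · rw [pow_eq, Module.End.mul_apply, ih1, rf_step, hcast, cA, cB]
    · rw [pow_eq, Module.End.mul_apply, ih2, rf_step, hcast, cA', cB']

lemma Sv_endpoint (i i' : B) (hm : 2 ≤ M i i') :
    Sv (Real.pi / M i i') (2*(M i i' : ℤ)+1) = 1
    ∧ Sv (Real.pi / M i i') (2*(M i i' : ℤ)) = 0
    ∧ Sv (Real.pi / M i i') (2*(M i i' : ℤ)-1) = -1 := by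
  set θ := Real.pi / M i i' with hθ
  have hs : Real.sin θ ≠ 0 := ne_of_gt (sin_theta_pos M i i' hm)
  have hmne : (M i i' : ℝ) ≠ 0 := by
    have : (2:ℝ) ≤ (M i i' : ℝ) := by exact_mod_cast hm
    linarith
  have hmθ : (M i i' : ℝ) * θ = Real.pi := by
    rw [hθ, mul_div_cancel₀ _ hmne]
  have key : ∀ x : ℝ, Real.sin (2 * Real.pi + x) = Real.sin x := by
    intro x
    rw [Real.sin_add, Real.sin_two_pi, Real.cos_two_pi]
    ring
  refine ⟨?_, ?_, ?_⟩
  · rw [Sv]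
    have : ((2*(M i i' : ℤ)+1 : ℤ) : ℝ) * θ = 2 * Real.pi + θ := by
      push_cast
      rw [← hmθ]; ring
    rw [this, key, div_self hs]
  · rw [Sv]
    have : ((2*(M i i' : ℤ) : ℤ) : ℝ) * θ = 2 * Real.pi + 0 := by
      push_cast
      rw [← hmθ]; ring
    rw [this, key, Real.sin_zero, zero_div]
  · rw [Sv]
    have : ((2*(M i i' : ℤ)-1 : ℤ) : ℝ) * θ = 2 * Real.pi + (-θ) := by
      push_cast
      rw [← hmθ]; ring
    rw [this, key, Real.sin_neg, neg_div, div_self hs]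

lemma rf_sq (i : B) : rf M i * rf M i = 1 := by
  apply LinearMap.ext
  intro v
  rw [Module.End.mul_apply, Module.End.one_apply]
  have hb : bf M i (rf M i v) = - bf M i v := by
    rw [rf_apply, map_sub, map_smul, bf_av, kco_diag]
    simp; ring
  rw [rf_apply (v := rf M i v), hb]
  rw [rf_apply]
  module

lemma rf_liftable : M.IsLiftable (rf M) := by
  intro i i'
  rcases eq_or_ne i i' with rfl | hne
  · rw [M.diagonal, pow_one, rf_sq]
  · by_cases h0 : M i i' = 0
    · rw [h0, pow_zero]
    · have hm : 2 ≤ M i i' := by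
        have h1 := M.off_diagonal i i' hne
        omega
      set m := M i i' with hmm
      apply LinearMap.ext
      intro v
      rw [Module.End.one_apply]
      set c := kco M i i' with hcc
      have hc : c = - Real.cos (Real.pi / m) := rfl
      have hs := sin_theta_pos M i i' hm
      have hd : 1 - c^2 ≠ 0 := by
        have : Real.sin (Real.pi / m)^2 + Real.cos (Real.pi / m)^2 = 1 :=
          Real.sin_sq_add_cos_sq _
        have h2 : 1 - c^2 = Real.sin (Real.pi / m)^2 := by rw [hc]; nlinarith
        rw [h2]
        positivity
      set a := (bf M i v - c * bf M i' v)/(1-c^2) with ha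
      set b := (bf M i' v - c * bf M i v)/(1-c^2) with hb
      set z := v - a • av i - b • av i' with hz
      have hzi : bf M i z = 0 := by
        rw [hz, map_sub, map_sub, map_smul, map_smul, bf_av, bf_av, kco_diag,
          ← hcc, ha, hb]
        linear_combination (-(bf M i v)) * mul_inv_cancel₀ hd
      have hzi' : bf M i' z = 0 := by
        rw [hz, map_sub, map_sub, map_smul, map_smul, bf_av, bf_av, kco_diag,
          kco_symm, ← hcc, ha, hb]
        linear_combination (-(bf M i' v)) * mul_inv_cancel₀ hd
      have hfix : ∀ n : ℕ, ((rf M i * rf M i')^n) z = z := by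
        intro n
        induction n with
        | zero => rw [pow_zero, Module.End.one_apply]
        | succ n ih =>
          rw [pow_succ, Module.End.mul_apply, Module.End.mul_apply,
            rf_fix M i' hzi', rf_fix M i hzi]
          exact ih
      have hv : v = z + a • av i + b • av i' := by rw [hz]; module
      obtain ⟨hp1, hp2⟩ := rf_pow_av M i i' hm m
      obtain ⟨hS1, hS0, hSm1⟩ := Sv_endpoint M i i' hm
      rw [hv, map_add, map_add, map_smul, map_smul, hfix, hp1, hp2,
        hS1, hS0, hSm1]
      module

end Geometric

section ParityRep

variable {B W : Type*} [Group W] {M : CoxeterMatrix B} (cs : CoxeterSystem M W)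


/-- Number of occurrences of `w` in a list. -/
def ncount (w : W) (l : List W) : ℕ := l.countP (fun t => decide (t = w))

lemma ncount_nil (w : W) : ncount w ([] : List W) = 0 := rfl

lemma ncount_cons (w t : W) (l : List W) :
    ncount w (t :: l) = ncount w l + (if t = w then 1 else 0) := by
  simp [ncount, List.countP_cons]

lemma ncount_append (w : W) (l l' : List W) :
    ncount w (l ++ l') = ncount w l + ncount w l' := by
  simp [ncount, List.countP_append]

lemma ncount_le_one_of_nodup {l : List W} (h : l.Nodup) (w : W) : ncount w l ≤ 1 := by
  induction l with
  | nil => simp [ncount_nil]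
  | cons t l ih =>
    rw [ncount_cons]
    rcases List.nodup_cons.mp h with ⟨ht, hl⟩
    by_cases hw : t = w
    · subst hw
      have : ncount t l = 0 := by
        rw [ncount, List.countP_eq_zero]
        intro a ha
        simp only [decide_eq_true_eq]
        rintro rfl; exact ht ha
      simp [this]
    · simp [hw]; exact ih hl
lemma ncount_pos_iff_mem (w : W) (l : List W) : 0 < ncount w l ↔ w ∈ l := by
  rw [ncount, List.countP_pos_iff]
  constructor
  · rintro ⟨a, ha, h⟩; simp at h; subst h; exact ha
  · intro h; exact ⟨w, h, by simp⟩

/-- One step of the parity representation. -/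
def pfun (i : B) : Function.End (W × ZMod 2) :=
  fun p => (cs.simple i * p.1 * cs.simple i, p.2 + (if p.1 = cs.simple i then 1 else 0))

lemma simple_conj_eq_iff (i : B) (w : W) :
    (cs.simple i * w * cs.simple i = cs.simple i) ↔ w = cs.simple i := by
  constructor
  · intro h
    have : cs.simple i * (cs.simple i * w * cs.simple i) * cs.simple i
        = cs.simple i * cs.simple i * cs.simple i := by rw [h]
    simp only [← mul_assoc, cs.simple_mul_simple_self, one_mul] at this
    simpa [mul_assoc, cs.simple_mul_simple_self] using this
  · intro h; rw [h]; simp [cs.simple_mul_simple_self, mul_assoc]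

lemma pfun_sq (i : B) : pfun cs i * pfun cs i = 1 := by
  funext p
  obtain ⟨w, e⟩ := p
  show pfun cs i (pfun cs i (w, e)) = (w, e)
  simp only [pfun]
  have h1 : cs.simple i * (cs.simple i * w * cs.simple i) * cs.simple i = w := by
    simp [← mul_assoc, cs.simple_mul_simple_self, cs.simple_mul_simple_cancel_right]
  rw [Prod.mk.injEq]
  constructor
  · exact h1
  · simp only [simple_conj_eq_iff]
    by_cases h : w = cs.simple i
    · simp [h, add_assoc, (by decide : (1 : ZMod 2) + 1 = 0)]
    · simp [h]

def pprod (ω : List B) : Function.End (W × ZMod 2) := (ω.map (pfun cs)).prod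

lemma pprod_nil : pprod cs ([] : List B) = 1 := rfl

lemma pprod_cons (i : B) (ω : List B) :
    pprod cs (i :: ω) = pfun cs i * pprod cs ω := by
  simp [pprod]

lemma pprod_apply (ω : List B) (p : W × ZMod 2) :
    pprod cs ω p = (cs.wordProd ω * p.1 * (cs.wordProd ω)⁻¹,
      p.2 + (ncount p.1 (cs.rightInvSeq ω) : ZMod 2)) := by
  induction ω generalizing p with
  | nil =>
    show p = _
    simp [rightInvSeq, ncount_nil]
  | cons i ω ih =>
    have hris : cs.rightInvSeq (i :: ω)
        = ((cs.wordProd ω)⁻¹ * cs.simple i * cs.wordProd ω) :: cs.rightInvSeq ω := rfl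
    have h0 : pprod cs (i :: ω) p = pfun cs i (pprod cs ω p) := by
      rw [pprod_cons]; rfl
    rw [h0, ih]
    simp only [pfun, hris, ncount_cons, wordProd_cons]
    have hfst : cs.simple i * (cs.wordProd ω * p.1 * (cs.wordProd ω)⁻¹) * cs.simple i
        = cs.simple i * cs.wordProd ω * p.1 * (cs.simple i * cs.wordProd ω)⁻¹ := by
      rw [mul_inv_rev, cs.inv_simple]; simp [mul_assoc]
    have hcond : (cs.wordProd ω * p.1 * (cs.wordProd ω)⁻¹ = cs.simple i)
        ↔ ((cs.wordProd ω)⁻¹ * cs.simple i * cs.wordProd ω = p.1) := by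
      constructor
      · intro h; rw [← h]; group
      · intro h; rw [← h]; group

    rw [hfst]
    refine Prod.ext rfl ?_
    simp only []
    push_cast
    by_cases h : cs.wordProd ω * p.1 * (cs.wordProd ω)⁻¹ = cs.simple i
    · rw [if_pos h, if_pos (hcond.mp h)]; ring
    · rw [if_neg h, if_neg (fun hh => h (hcond.mpr hh))]; ring

lemma rbr (i i' : B) :
    (cs.simple i * cs.simple i') * cs.simple i' * (cs.simple i * cs.simple i')
      = cs.simple i' := by
  simp [mul_assoc, cs.simple_mul_simple_self, cs.simple_mul_simple_cancel_left]

lemma move (i i' : B) (k : ℕ) :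
    (cs.simple i * cs.simple i')^k * cs.simple i' * (cs.simple i * cs.simple i')^k
      = cs.simple i' := by
  induction k with
  | zero => simp
  | succ k ih =>
    set r := cs.simple i * cs.simple i' with hr
    have key : r ^ (k+1) * cs.simple i' * r ^ (k+1)
        = r^k * (r * cs.simple i' * r) * r^k := by
      nth_rw 1 [pow_succ]
      nth_rw 1 [pow_succ']
      simp [mul_assoc]
    rw [key, rbr cs i i']
    exact ih

lemma move' (i i' : B) (k : ℕ) :
    ((cs.simple i * cs.simple i')^k)⁻¹ * cs.simple i'
      = cs.simple i' * (cs.simple i * cs.simple i')^k := by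
  have h := move cs i i' k
  rw [inv_mul_eq_iff_eq_mul, ← mul_assoc]
  exact h.symm

lemma risAlt (i i' : B) (n : ℕ) :
    cs.rightInvSeq (alternatingWord i i' n)
      = ((List.range n).reverse).map
          (fun k => cs.simple i' * (cs.simple i * cs.simple i')^k) := by
  induction n with
  | zero => simp [alternatingWord, rightInvSeq]
  | succ n ih =>
    rw [alternatingWord_succ']
    have hris : cs.rightInvSeq ((if Even n then i' else i) :: alternatingWord i i' n)
        = ((cs.wordProd (alternatingWord i i' n))⁻¹
            * cs.simple (if Even n then i' else i)
            * cs.wordProd (alternatingWord i i' n)) :: cs.rightInvSeq (alternatingWord i i' n) := rfl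
    rw [hris, ih, List.range_succ, List.reverse_append]
    simp only [List.reverse_singleton, List.singleton_append, List.map_cons]
    congr 1
    rw [cs.prod_alternatingWord_eq_mul_pow]
    set r := cs.simple i * cs.simple i' with hr
    rcases Nat.even_or_odd n with he | ho
    · have hu := he
      obtain ⟨u, hu⟩ := hu
      have hn2 : n / 2 = u := by omega
      simp only [if_pos he, hn2, one_mul]
      calc (r^u)⁻¹ * cs.simple i' * r^u
          = (cs.simple i' * r^u) * r^u := by rw [move' cs i i' u]
        _ = cs.simple i' * r^n := by rw [mul_assoc, ← pow_add]; congr 2; omega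
    · obtain ⟨u, hu⟩ := ho
      have hne : ¬ Even n := by rw [Nat.not_even_iff_odd]; exact ⟨u, hu⟩
      have hn2 : n / 2 = u := by omega
      simp only [if_neg hne, hn2]
      have hbab : cs.simple i' * cs.simple i * cs.simple i' = r⁻¹ * cs.simple i' := by
        rw [hr, mul_inv_rev, cs.inv_simple, cs.inv_simple]
      calc (cs.simple i' * r^u)⁻¹ * cs.simple i * (cs.simple i' * r^u)
          = (r^u)⁻¹ * (cs.simple i' * cs.simple i * cs.simple i') * r^u := by
            rw [mul_inv_rev, cs.inv_simple]; simp [mul_assoc]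
        _ = (r^u)⁻¹ * (r⁻¹ * cs.simple i') * r^u := by rw [hbab]
        _ = (r^(u+1))⁻¹ * cs.simple i' * r^u := by rw [pow_succ]; group
        _ = (cs.simple i' * r^(u+1)) * r^u := by rw [move' cs i i' (u+1)]
        _ = cs.simple i' * r^n := by rw [mul_assoc, ← pow_add]; congr 2; omega

lemma ncount_reverse (w : W) (l : List W) : ncount w l.reverse = ncount w l := by
  induction l with
  | nil => rfl
  | cons t l ih =>
    rw [List.reverse_cons, ncount_append, ih]
    simp [ncount, List.countP_cons]
    try omega

lemma pprod_alt (i i' : B) (m : ℕ) :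
    pprod cs (alternatingWord i i' (2*m)) = (pfun cs i * pfun cs i')^m := by
  induction m with
  | zero => simp [pprod, alternatingWord]
  | succ m ih =>
    have h2 : 2 * (m+1) = (2*m + 1) + 1 := by ring
    rw [h2, alternatingWord_succ', alternatingWord_succ']
    have he1 : ¬ Even (2*m+1) := by simp [Nat.even_add_one, parity_simps]
    have he2 : Even (2*m) := ⟨m, by ring⟩
    rw [if_neg he1, if_pos he2, pprod_cons, pprod_cons, ih, pow_succ']
    rw [mul_assoc]

lemma ncount_ris_alt_even (i i' : B) (w : W) :
    (ncount w (cs.rightInvSeq (alternatingWord i i' (2 * M i i'))) : ZMod 2) = 0 := by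
  set m := M i i' with hm
  rw [risAlt, List.map_reverse, ncount_reverse]
  have hr : (cs.simple i * cs.simple i') ^ m = 1 := cs.simple_mul_simple_pow i i'
  have : (2 : ℕ) * m = m + m := by ring
  rw [this, List.range_add, List.map_append, ncount_append]
  have hmap : (List.map (fun x => m + x) (List.range m)).map
        (fun k => cs.simple i' * (cs.simple i * cs.simple i')^k)
      = (List.range m).map (fun k => cs.simple i' * (cs.simple i * cs.simple i')^k) := by
    rw [List.map_map]
    apply List.map_congr_left
    intro k hk
    simp only [Function.comp_apply]
    rw [pow_add, hr, one_mul]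
  rw [hmap]
  push_cast
  rw [← two_mul, (by decide : (2 : ZMod 2) = 0), zero_mul]

lemma pfun_liftable : M.IsLiftable (pfun cs) := by
  intro i i'
  by_cases h0 : M i i' = 0
  · rw [h0, pow_zero]
  · rw [← pprod_alt]
    funext p
    rw [pprod_apply]
    have hprod : cs.wordProd (alternatingWord i i' (2 * M i i')) = 1 := by
      rw [cs.prod_alternatingWord_eq_mul_pow]
      have : Even (2 * M i i') := ⟨M i i', by ring⟩
      rw [if_pos this, one_mul]
      have : 2 * M i i' / 2 = M i i' := by omega
      rw [this, cs.simple_mul_simple_pow]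
    rw [hprod, ncount_ris_alt_even]
    show _ = p
    simp

def prep : W →* Function.End (W × ZMod 2) := cs.lift ⟨pfun cs, pfun_liftable cs⟩

lemma prep_wordProd (ω : List B) : prep cs (cs.wordProd ω) = pprod cs ω := by
  induction ω with
  | nil => simpa [pprod] using (map_one (prep cs))
  | cons i ω ih =>
    rw [wordProd_cons, map_mul, ih, pprod_cons]
    congr 1
    exact cs.lift_apply_simple (pfun_liftable cs) i

lemma parity_invariant {ω ω' : List B} (h : cs.wordProd ω = cs.wordProd ω') (w : W) :
    (ncount w (cs.rightInvSeq ω) : ZMod 2) = (ncount w (cs.rightInvSeq ω') : ZMod 2) := by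
  have h0 : pprod cs ω = pprod cs ω' := by
    rw [← prep_wordProd, ← prep_wordProd, h]
  have h1 := congrArg (fun F : Function.End (W × ZMod 2) => (F (w, 0)).2) h0
  simp only [pprod_apply, zero_add] at h1
  exact h1

lemma length_eq_of_nodup_parity {l l' : List W} (hl : l.Nodup) (hl' : l'.Nodup)
    (h : ∀ w : W, (ncount w l : ZMod 2) = (ncount w l' : ZMod 2)) :
    l.length = l'.length := by
  have hmem : ∀ w : W, w ∈ l ↔ w ∈ l' := by
    intro w
    rw [← ncount_pos_iff_mem w l, ← ncount_pos_iff_mem w l']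
    have c1 := ncount_le_one_of_nodup hl w
    have c2 := ncount_le_one_of_nodup hl' w
    have hw := h w
    interval_cases h1 : ncount w l <;> interval_cases h2 : ncount w l' <;>
      first
        | simp_all
        | exact absurd hw (by decide)
  have hfin : l.toFinset = l'.toFinset := by
    ext w; simp only [List.mem_toFinset]; exact hmem w
  calc l.length = l.toFinset.card := (List.toFinset_card_of_nodup hl).symm
    _ = l'.toFinset.card := by rw [hfin]
    _ = l'.length := List.toFinset_card_of_nodup hl'

lemma not_nodup_ris_of_not_reduced {ω : List B} (h : ¬ cs.IsReduced ω) :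
    ¬ (cs.rightInvSeq ω).Nodup := by
  intro hnd
  obtain ⟨ω₀, hlen, hprod⟩ := cs.exists_reduced_word (cs.wordProd ω)
  have hred : cs.IsReduced ω₀ := hlen
  have hnd₀ := hred.nodup_rightInvSeq
  apply h
  unfold CoxeterSystem.IsReduced
  have hlen2 : (cs.rightInvSeq ω).length = (cs.rightInvSeq ω₀).length :=
    length_eq_of_nodup_parity hnd hnd₀ (fun w => parity_invariant cs hprod w)
  rw [cs.length_rightInvSeq, cs.length_rightInvSeq] at hlen2
  have hred' : cs.length (cs.wordProd ω) = ω₀.length := by rw [hprod]; exact hred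
  omega

lemma wordProd_eq_wordProd_erase {ω : List B} {j j' : ℕ} (hjj : j < j')
    (hj' : j' < ω.length)
    (dup : (cs.rightInvSeq ω).getD j 1 = (cs.rightInvSeq ω).getD j' 1) :
    cs.wordProd ω = cs.wordProd ((ω.eraseIdx j).eraseIdx (j' - 1)) := by
  set! t := (cs.rightInvSeq ω).getD j 1 with h₁
  set! t' := (cs.rightInvSeq (ω.eraseIdx j)).getD (j' - 1) 1 with h₂
  have h₃ : t' = (cs.rightInvSeq ω).getD j' 1 := by
    rw [h₂, cs.getD_rightInvSeq, cs.getD_rightInvSeq,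
      (Nat.sub_add_cancel (by omega) : j' - 1 + 1 = j'), eraseIdx_eq_take_drop_succ,
      drop_append, drop_of_length_le (by simp [hjj.le]), length_take,
      drop_drop, nil_append, min_eq_left_of_lt (hjj.trans hj'), Nat.add_comm,
      ← add_assoc, Nat.sub_add_cancel (by omega), mul_left_inj, mul_right_inj]
    congr 2
    show (take j ω ++ drop (j + 1) ω)[j' - 1]? = ω[j']?
    rw [getElem?_append_right (by simp [Nat.le_sub_one_of_lt hjj]), getElem?_drop]
    congr
    show j + 1 + (j' - 1 - List.length (take j ω)) = j'
    rw [length_take]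
    omega
  have h₄ : t * t' = 1 := by
    rw [h₁, h₃, dup]
    exact cs.getD_rightInvSeq_mul_self _ _
  calc cs.wordProd ω = cs.wordProd ω * t * t' := by rw [mul_assoc, h₄]; group
    _ = cs.wordProd (ω.eraseIdx j) * t' :=
        congrArg (· * t') (cs.wordProd_mul_getD_rightInvSeq _ _)
    _ = cs.wordProd ((ω.eraseIdx j).eraseIdx (j' - 1)) :=
        cs.wordProd_mul_getD_rightInvSeq _ _

lemma exists_reduced_sublist_aux : ∀ (n : ℕ) (ω : List B), ω.length ≤ n →
    ∃ ω' : List B, ω'.Sublist ω ∧ cs.IsReduced ω' ∧ cs.wordProd ω' = cs.wordProd ω := by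
  intro n
  induction n with
  | zero =>
    intro ω hω
    have : ω = [] := List.eq_nil_of_length_eq_zero (by omega)
    subst this
    exact ⟨[], List.Sublist.refl _, by simp [CoxeterSystem.IsReduced], rfl⟩
  | succ n ih =>
    intro ω hω
    by_cases hred : cs.IsReduced ω
    · exact ⟨ω, List.Sublist.refl _, hred, rfl⟩
    · have hnnd := not_nodup_ris_of_not_reduced cs hred
      rw [List.nodup_iff_getElem?_ne_getElem?] at hnnd
      push_neg at hnnd
      obtain ⟨j, j', hjj, hj'len, hdup⟩ := hnnd
      rw [cs.length_rightInvSeq] at hj'len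
      have hdup' : (cs.rightInvSeq ω).getD j 1 = (cs.rightInvSeq ω).getD j' 1 := by
        rw [List.getD_eq_getElem?_getD, List.getD_eq_getElem?_getD, hdup]
      have h₅ := wordProd_eq_wordProd_erase cs hjj hj'len hdup'
      set ω₂ := (ω.eraseIdx j).eraseIdx (j' - 1) with hω₂
      have hsub2 : ω₂.Sublist ω :=
        ((ω.eraseIdx j).eraseIdx_sublist (j' - 1)).trans (ω.eraseIdx_sublist j)
      have hlen1 : (ω.eraseIdx j).length + 1 = ω.length :=
        List.length_eraseIdx_add_one (by omega)
      have hlen2 : ω₂.length ≤ n := by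
        have := ((ω.eraseIdx j).eraseIdx_sublist (j' - 1)).length_le
        rw [← hω₂] at this
        omega
      obtain ⟨ω', hsub, hred', hprod⟩ := ih ω₂ hlen2
      exact ⟨ω', hsub.trans hsub2, hred', by rw [hprod, ← h₅]⟩

lemma exists_reduced_sublist (ω : List B) :
    ∃ ω' : List B, ω'.Sublist ω ∧ cs.IsReduced ω' ∧ cs.wordProd ω' = cs.wordProd ω :=
  exists_reduced_sublist_aux cs ω.length ω le_rfl


/-- The geometric representation of `W`. -/
def grep : W →* Module.End ℝ (B →₀ ℝ) := cs.lift ⟨rf M, rf_liftable M⟩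

lemma simple_injective : Function.Injective cs.simple := by
  intro b b' h
  by_contra hne
  have h2 : rf M b = rf M b' := by
    have e1 : grep cs (cs.simple b) = rf M b := cs.lift_apply_simple (rf_liftable M) b
    have e2 : grep cs (cs.simple b') = rf M b' := cs.lift_apply_simple (rf_liftable M) b'
    rw [← e1, ← e2, h]
  have h3 := congrArg (fun f : Module.End ℝ (B →₀ ℝ) => (f (av b)) b) h2
  rw [rf_av_self] at h3
  rw [rf_av_other] at h3
  rw [Finsupp.neg_apply, Finsupp.sub_apply, Finsupp.smul_apply] at h3
  rw [av, av, Finsupp.single_eq_same, Finsupp.single_eq_of_ne hne] at h3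
  norm_num at h3

end ParityRep

variable {B W : Type*} [Group W] {M : CoxeterMatrix B} (cs : CoxeterSystem M W)

/-- `l` is a reduced word for `w`. -/
def IsReducedWordOf (w : W) (l : List B) : Prop :=
  cs.wordProd l = w ∧ cs.IsReduced l

/-- Bruhat order on `W`, characterized by the subword property. -/
def BruhatLe (u v : W) : Prop :=
  ∃ l l' : List B, IsReducedWordOf cs v l ∧ l'.Sublist l ∧ cs.wordProd l' = u

/-- The standard parabolic subgroup `W_I` generated by the simple reflections in `I`. -/
def parabolicSubgroup (I : Set B) : Subgroup W :=
  Subgroup.closure (cs.simple '' I)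

/-- `w` is a minimal-length representative of the coset `w W_I`,
i.e. `w ∈ W^I`. -/
def IsMinRep (I : Set B) (w : W) : Prop :=
  ∀ v : W, w⁻¹ * v ∈ parabolicSubgroup cs I → cs.length w ≤ cs.length v

lemma exists_word_of_mem_parabolic {I : Set B} {x : W} (hx : x ∈ parabolicSubgroup cs I) :
    ∃ l : List B, (∀ b ∈ l, b ∈ I) ∧ cs.wordProd l = x := by
  induction hx using Subgroup.closure_induction with
  | mem x hx =>
    obtain ⟨b, hb, rfl⟩ := hx
    exact ⟨[b], by simpa using hb, cs.wordProd_singleton b⟩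
  | one => exact ⟨[], by simp, cs.wordProd_nil⟩
  | mul x y hx hy ihx ihy =>
    obtain ⟨l₁, hl₁, hp₁⟩ := ihx
    obtain ⟨l₂, hl₂, hp₂⟩ := ihy
    refine ⟨l₁ ++ l₂, ?_, by rw [cs.wordProd_append, hp₁, hp₂]⟩
    intro b hb
    rcases List.mem_append.mp hb with h | h
    · exact hl₁ b h
    · exact hl₂ b h
  | inv x hx ih =>
    obtain ⟨l, hl, hp⟩ := ih
    refine ⟨l.reverse, ?_, by rw [cs.wordProd_reverse, hp]⟩
    intro b hb
    exact hl b (List.mem_reverse.mp hb)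

lemma mem_of_simple_mem_parabolic {I : Set B} {s0 : B}
    (h : cs.simple s0 ∈ parabolicSubgroup cs I) : s0 ∈ I := by
  obtain ⟨l, hl, hprod⟩ := exists_word_of_mem_parabolic cs h
  obtain ⟨l', hsub, hred, hprod'⟩ := exists_reduced_sublist cs l
  have hlen : l'.length = 1 := by
    have h2 : cs.length (cs.wordProd l') = l'.length := hred
    rw [hprod', hprod, cs.length_simple] at h2
    omega
  obtain ⟨b, hb⟩ := List.length_eq_one_iff.mp hlen
  subst hb
  have hbs : cs.simple b = cs.simple s0 := by
    rw [← cs.wordProd_singleton b, hprod', hprod]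
  have : b = s0 := simple_injective cs hbs
  subst this
  exact hl b (hsub.subset (List.mem_singleton_self b))

/-- For `w ∈ W^I`, the set of simple reflections lying in the Bruhat
interval `[1,w] ∩ W^I` is exactly `S(w) \ I`, where `S(w) = {s ∈ S | s ≤ w}` is the support
of `w`. -/
theorem simples_in_interval_eq_support_diff (I : Set B) (w : W) (hw : IsMinRep cs I w) :
    {s : B | BruhatLe cs (cs.simple s) w ∧ IsMinRep cs I (cs.simple s)}
      = {s : B | BruhatLe cs (cs.simple s) w} \ I := by
  ext s0
  simp only [Set.mem_setOf_eq, Set.mem_diff]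
  constructor
  · rintro ⟨hb, hmin⟩
    refine ⟨hb, fun hsI => ?_⟩
    have hmem : (cs.simple s0)⁻¹ * 1 ∈ parabolicSubgroup cs I := by
      rw [mul_one, cs.inv_simple]
      exact Subgroup.subset_closure ⟨s0, hsI, rfl⟩
    have h1 := hmin 1 hmem
    rw [cs.length_one] at h1
    have h2 := cs.length_simple s0
    omega
  · rintro ⟨hb, hsI⟩
    refine ⟨hb, fun v hv => ?_⟩
    by_cases hv1 : v = 1
    · subst hv1
      rw [mul_one, cs.inv_simple] at hv
      exact absurd (mem_of_simple_mem_parabolic cs hv) hsI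
    · have h1 : cs.length v ≠ 0 := fun h => hv1 (cs.length_eq_zero_iff.mp h)
      have h2 := cs.length_simple s0
      omega
end
end

section
/- Let (W,S) be a Coxeter system, I ⊆ S, v ∈ W^I, and t ∈ S with ℓ(vt) < ℓ(v) (i.e., t ∈ D_R(v)). Then among all u ∈ W^{I ∪ {t}} with u ≤ v in Bruhat order, there is a unique maximal one, namely the minimal-length representative of the coset v·W_{I∪{t}}. -/
open CoxeterSystem

variable {B W : Type*} [Group W] {M : CoxeterMatrix B} (cs : CoxeterSystem M W)

open CoxeterSystem List

attribute [local instance] Classical.decEq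

namespace CoxAux

variable {B W : Type*} [Group W] {M : CoxeterMatrix B} (cs : CoxeterSystem M W)

local prefix:100 "s" => cs.simple
local prefix:100 "π" => cs.wordProd
local prefix:100 "ℓ" => cs.length
local prefix:100 "ris" => cs.rightInvSeq

lemma conj_eq_iff (a x y : W) : a * x * a⁻¹ = y ↔ x = a⁻¹ * y * a := by
  constructor
  · intro h; rw [← h]; group
  · intro h; rw [h]; group

lemma simple_conj_simple_eq_iff (i : B) (x : W) : s i * x * s i = s i ↔ x = s i := by
  constructor
  · intro h
    have h' : s i * x * s i = s i * s i * s i := by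
      rw [cs.simple_mul_simple_self, one_mul, h]
    have := mul_right_cancel h'
    exact mul_left_cancel this
  · rintro rfl
    rw [cs.simple_mul_simple_self, one_mul]

noncomputable def sig (i : B) : Equiv.Perm (W × ZMod 2) :=
  Function.Involutive.toPerm
    (fun q => (s i * q.1 * s i, q.2 + if q.1 = s i then 1 else 0))
    (by
      rintro ⟨x, ε⟩
      simp only
      have h1 : s i * (s i * x * s i) * s i = x := by
        have : s i * (s i * x * s i) * s i = (s i * s i) * x * (s i * s i) := by group
        rw [this, cs.simple_mul_simple_self, one_mul, mul_one]
      refine Prod.ext h1 ?_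
      simp only [simple_conj_simple_eq_iff]
      rcases eq_or_ne x (s i) with h | h
      · have h2 : (1 : ZMod 2) + 1 = 0 := rfl
        simp [h, add_assoc, h2]
      · simp [h])

@[simp] lemma sig_apply (i : B) (x : W) (ε : ZMod 2) :
    sig cs i (x, ε) = (s i * x * s i, ε + if x = s i then 1 else 0) := rfl

lemma rightInvSeq_cons (i : B) (ω : List B) :
    ris (i :: ω) = ((π ω)⁻¹ * s i * π ω) :: ris ω := rfl

lemma prod_map_sig (ω : List B) (x : W) (ε : ZMod 2) :
    ((ω.map (sig cs)).prod) (x, ε) =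
      (π ω * x * (π ω)⁻¹, ε + ((ris ω).count x : ZMod 2)) := by
  induction ω with
  | nil => simp
  | cons i ω ih =>
    rw [List.map_cons, List.prod_cons, Equiv.Perm.mul_apply, ih, sig_apply]
    refine Prod.ext ?_ ?_
    · show s i * (π ω * x * (π ω)⁻¹) * s i = π (i :: ω) * x * (π (i :: ω))⁻¹
      rw [cs.wordProd_cons, mul_inv_rev, cs.inv_simple]
      group
    · show ε + ((ris ω).count x : ZMod 2) + (if π ω * x * (π ω)⁻¹ = s i then 1 else 0)
        = ε + (((ris (i :: ω)).count x : ℕ) : ZMod 2)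
      rw [rightInvSeq_cons, List.count_cons]
      simp only [beq_iff_eq]
      have hiff : (π ω * x * (π ω)⁻¹ = s i) ↔ ((π ω)⁻¹ * s i * π ω = x) := by
        constructor
        · intro h; rw [← h]; group
        · intro h; rw [← h]; group
      rw [if_congr hiff rfl rfl]
      push_cast [apply_ite (fun n : ℕ => (n : ZMod 2))]
      ring


lemma simple_conj_pow (i i' : B) (k : ℤ) :
    s i' * (s i * s i') ^ k * (s i')⁻¹ = (s i * s i') ^ (-k) := by
  have h0 : MulAut.conj (s i') (s i * s i') = (s i * s i')⁻¹ := by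
    rw [MulAut.conj_apply, mul_inv_rev, cs.inv_simple, cs.inv_simple]
    simp [mul_assoc, cs.simple_mul_simple_self]
  calc s i' * (s i * s i') ^ k * (s i')⁻¹
      = (MulAut.conj (s i')) ((s i * s i') ^ k) := by rw [MulAut.conj_apply]
    _ = ((MulAut.conj (s i')) (s i * s i')) ^ k := map_zpow _ _ _
    _ = ((s i * s i')⁻¹) ^ k := by rw [h0]
    _ = (s i * s i') ^ (-k) := by rw [zpow_neg, inv_zpow]

lemma simple_mul_zpow (i i' : B) (k : ℤ) :
    s i' * (s i * s i') ^ k = (s i * s i') ^ (-k) * s i' := by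
  have h := simple_conj_pow cs i i' k
  calc s i' * (s i * s i') ^ k
      = (s i' * (s i * s i') ^ k * (s i')⁻¹) * s i' := by group
    _ = (s i * s i') ^ (-k) * s i' := by rw [h]

lemma conj_head_alternatingWord (i i' : B) (n : ℕ) :
    (π (alternatingWord i i' n))⁻¹ * s (if Even n then i' else i) * π (alternatingWord i i' n)
      = (s i * s i') ^ (-(n:ℤ)) * s i' := by
  rw [cs.prod_alternatingWord_eq_mul_pow]
  rcases Nat.even_or_odd n with h | h
  · rw [if_pos h, if_pos h, one_mul]
    have hc : ((n / 2 : ℕ) : ℤ) + ((n / 2 : ℕ) : ℤ) = (n : ℤ) := by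
      have := Nat.even_iff.mp h
      omega
    calc ((s i * s i') ^ (n / 2))⁻¹ * s i' * (s i * s i') ^ (n / 2)
        = (s i * s i') ^ (-((n/2 : ℕ) : ℤ)) * (s i' * (s i * s i') ^ ((n/2 : ℕ) : ℤ)) := by
          rw [← zpow_natCast (s i * s i') (n / 2)]
          group
      _ = (s i * s i') ^ (-((n/2 : ℕ) : ℤ)) * ((s i * s i') ^ (-((n/2 : ℕ) : ℤ)) * s i') := by
          rw [simple_mul_zpow cs]
      _ = (s i * s i') ^ (-(n:ℤ)) * s i' := by
          rw [← mul_assoc, ← zpow_add]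
          congr 2
          omega
  · rw [if_neg (Nat.not_even_iff_odd.mpr h), if_neg (Nat.not_even_iff_odd.mpr h)]
    have hmid : s i' * s i * s i' = (s i * s i')⁻¹ * s i' := by
      rw [mul_inv_rev, cs.inv_simple, cs.inv_simple]
    have hc : (1 : ℤ) + ((n / 2 : ℕ) : ℤ) + ((n / 2 : ℕ) : ℤ) = (n : ℤ) := by
      have := Nat.odd_iff.mp h
      omega
    calc (s i' * (s i * s i') ^ (n / 2))⁻¹ * s i * (s i' * (s i * s i') ^ (n / 2))
        = (s i * s i') ^ (-((n/2 : ℕ) : ℤ)) * (s i' * s i * s i') * (s i * s i') ^ ((n/2 : ℕ) : ℤ) := by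
          rw [← zpow_natCast (s i * s i') (n / 2), mul_inv_rev, cs.inv_simple]
          group
      _ = (s i * s i') ^ (-((n/2 : ℕ) : ℤ)) * ((s i * s i')⁻¹ * (s i' * (s i * s i') ^ ((n/2 : ℕ) : ℤ))) := by
          rw [hmid]; group
      _ = (s i * s i') ^ (-((n/2 : ℕ) : ℤ)) * ((s i * s i')⁻¹ * ((s i * s i') ^ (-((n/2 : ℕ) : ℤ)) * s i')) := by
          rw [simple_mul_zpow cs]
      _ = (s i * s i') ^ (-(n:ℤ)) * s i' := by
          rw [← zpow_neg_one (s i * s i'), ← mul_assoc, ← mul_assoc, ← zpow_add, ← zpow_add]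
          congr 2
          omega

lemma rightInvSeq_alternatingWord (i i' : B) (n : ℕ) :
    ris (alternatingWord i i' n)
      = (((List.range n).map (fun (j : ℕ) => (s i * s i') ^ (-(j:ℤ)) * s i')).reverse) := by
  induction n with
  | zero => simp [alternatingWord]
  | succ n ih =>
    rw [alternatingWord_succ', rightInvSeq_cons, ih, List.range_succ]
    rw [conj_head_alternatingWord cs]
    simp

lemma prod_map_alternatingWord {G : Type*} [Monoid G] (f : B → G) (i i' : B) (m : ℕ) :
    ((alternatingWord i i' m).map f).prod =
      (if Even m then 1 else f i') * (f i * f i') ^ (m / 2) := by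
  induction m with
  | zero => simp [alternatingWord]
  | succ m ih =>
    rw [alternatingWord_succ', List.map_cons, List.prod_cons, ih]
    by_cases hm : Even m
    · have h₁ : ¬ Even (m + 1) := by simp [hm, parity_simps]
      have h₂ : (m + 1) / 2 = m / 2 := Nat.succ_div_of_not_dvd <| by rwa [← even_iff_two_dvd]
      simp [hm, h₁, h₂]
    · have h₁ : Even (m + 1) := by simp [hm, parity_simps]
      have h₂ : (m + 1) / 2 = m / 2 + 1 := Nat.succ_div_of_dvd h₁.two_dvd
      simp [hm, h₁, h₂, ← pow_succ', ← mul_assoc]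

lemma zmod2_add_self (y : ZMod 2) : y + y = 0 := by revert y; decide

lemma sig_liftable : M.IsLiftable (sig cs) := by
  intro i i'
  have key : ((alternatingWord i i' (2 * M i i')).map (sig cs)).prod
      = (sig cs i * sig cs i') ^ (M i i') := by
    rw [prod_map_alternatingWord, if_pos (even_two_mul _), one_mul]
    congr 1
    omega
  rw [← key]
  apply Equiv.ext
  rintro ⟨x, ε⟩
  have hπ : π (alternatingWord i i' (2 * M i i')) = 1 := by
    rw [cs.prod_alternatingWord_eq_mul_pow, if_pos (even_two_mul _), one_mul]
    have h2 : 2 * M i i' / 2 = M i i' := by omega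
    rw [h2, cs.simple_mul_simple_pow]
  have hcount : (((ris (alternatingWord i i' (2 * M i i'))).count x : ℕ) : ZMod 2) = 0 := by
    rw [rightInvSeq_alternatingWord cs, List.count_reverse]
    have h2 : 2 * M i i' = M i i' + M i i' := by omega
    rw [h2, List.range_add, List.map_append, List.count_append, List.map_map]
    have hmap : (List.range (M i i')).map ((fun (j : ℕ) => (s i * s i') ^ (-(j:ℤ)) * s i')
          ∘ (fun (j : ℕ) => M i i' + j))
        = (List.range (M i i')).map (fun (j : ℕ) => (s i * s i') ^ (-(j:ℤ)) * s i') := by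
      apply List.map_congr_left
      intro a _
      simp only [Function.comp_apply]
      congr 1
      have he : (-(↑(M i i' + a)) : ℤ) = (-(M i i' : ℤ)) + (-(a:ℤ)) := by push_cast; ring
      rw [he, zpow_add]
      have hone : (s i * s i') ^ (-(M i i' : ℤ)) = 1 := by
        rw [zpow_neg, zpow_natCast, cs.simple_mul_simple_pow, inv_one]
      rw [hone, one_mul]
    rw [hmap]
    push_cast
    exact zmod2_add_self _
  rw [prod_map_sig, hπ, hcount]
  simp

noncomputable def phi : W →* Equiv.Perm (W × ZMod 2) := cs.lift ⟨sig cs, sig_liftable cs⟩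

lemma phi_wordProd (ω : List B) : phi cs (π ω) = (ω.map (sig cs)).prod := by
  show phi cs (List.prod (ω.map cs.simple)) = _
  rw [map_list_prod, List.map_map]
  congr 1
  apply List.map_congr_left
  intro a _
  exact cs.lift_apply_simple (sig_liftable cs) a

lemma count_ris_parity {ω₁ ω₂ : List B} (h : π ω₁ = π ω₂) (x : W) :
    (((ris ω₁).count x : ℕ) : ZMod 2) = (((ris ω₂).count x : ℕ) : ZMod 2) := by
  have h1 := phi_wordProd cs ω₁
  have h2 := phi_wordProd cs ω₂
  rw [h, h2] at h1
  have happ : ((ω₁.map (sig cs)).prod) (x, 0) = ((ω₂.map (sig cs)).prod) (x, 0) := by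
    rw [← h1]
  rw [prod_map_sig cs, prod_map_sig cs, h] at happ
  simpa using (Prod.ext_iff.mp happ).2


lemma rightInvSeq_append (α β : List B) :
    ris (α ++ β) = (ris α).map (fun x => (π β)⁻¹ * x * π β) ++ ris β := by
  induction α with
  | nil => simp
  | cons i α ih =>
    rw [List.cons_append, rightInvSeq_cons, rightInvSeq_cons, ih, List.map_cons, List.cons_append]
    have hh : (π (α ++ β))⁻¹ * s i * π (α ++ β)
        = (π β)⁻¹ * ((π α)⁻¹ * s i * π α) * π β := by
      rw [cs.wordProd_append, mul_inv_rev]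
      group
    rw [hh]

lemma mulconj_injective {G : Type*} [Group G] (g : G) :
    Function.Injective (fun x : G => g * x * g) := by
  intro y z h
  simp only at h
  exact mul_left_cancel (mul_right_cancel h)

lemma cond1_iff {G : Type*} [Group G] (g u : G) (hg : g * g = 1) :
    (g * u * g = g * u * (g * u * g)) ↔ u = g := by
  have hginv : g⁻¹ = g := inv_eq_of_mul_eq_one_right hg
  rw [mul_right_inj, right_eq_mul, mul_eq_one_iff_inv_eq, hginv, eq_comm]

lemma cond2_iff {G : Type*} [Group G] (g u : G) (hg : g * g = 1) :
    (g * u * g = g) ↔ u = g := by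
  have hginv : g⁻¹ = g := inv_eq_of_mul_eq_one_right hg
  rw [mul_eq_right, mul_eq_one_iff_inv_eq, hginv, eq_comm]

lemma cond1_iff' {G : Type*} [Group G] (g u : G) (hg : g * g = 1) :
    (g * u * (g * u * g) = g * u * g) ↔ u = g := by
  rw [eq_comm, cond1_iff g u hg]

lemma cond2_iff' {G : Type*} [Group G] (g u : G) (hg : g * g = 1) :
    (g = g * u * g) ↔ u = g := by
  rw [eq_comm, cond2_iff g u hg]

lemma odd_count_ris_palindrome (a : List B) (i : B) :
    Odd ((ris (a ++ [i] ++ a.reverse)).count (π a * s i * (π a)⁻¹)) := by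
  induction a with
  | nil =>
    simp only [List.nil_append, List.reverse_nil, List.append_nil, cs.wordProd_nil,
      one_mul, inv_one, mul_one]
    rw [cs.rightInvSeq_singleton]
    simp [List.count_cons]
  | cons j b ih =>
    have hshape : (j :: b) ++ [i] ++ (j :: b).reverse
        = j :: ((b ++ [i] ++ b.reverse) ++ [j]) := by
      simp [List.reverse_cons, List.append_assoc]
    rw [hshape]
    set t' : W := π b * s i * (π b)⁻¹ with ht'
    have hπρ' : π (b ++ [i] ++ b.reverse) = t' := by
      rw [cs.wordProd_append, cs.wordProd_append, cs.wordProd_reverse, cs.wordProd_singleton]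
    have hx : π (j :: b) * s i * (π (j :: b))⁻¹ = s j * t' * s j := by
      rw [cs.wordProd_cons, mul_inv_rev, cs.inv_simple, ht']
      group
    rw [hx]
    have hγ : (b ++ [i] ++ b.reverse) ++ [j] = (b ++ [i] ++ b.reverse).concat j := by
      rw [List.concat_eq_append]
    rw [rightInvSeq_cons, hγ, cs.rightInvSeq_concat]
    have hπγ : π ((b ++ [i] ++ b.reverse).concat j) = t' * s j := by
      rw [cs.wordProd_concat, hπρ']
    rw [hπγ]
    have hinv : t'⁻¹ = t' := by
      rw [ht']
      simp [mul_inv_rev, cs.inv_simple, mul_assoc]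
    have hhead : (t' * s j)⁻¹ * s j * (t' * s j) = s j * t' * (s j * t' * s j) := by
      rw [mul_inv_rev, cs.inv_simple, hinv]
      group
    rw [hhead]
    rw [List.count_cons, List.concat_eq_append, List.count_append, List.count_cons,
      List.count_nil]
    have hmapcount : ((ris (b ++ [i] ++ b.reverse)).map (⇑(MulAut.conj (s j)))).count
        (s j * t' * s j) = (ris (b ++ [i] ++ b.reverse)).count t' := by
      have h0 := List.count_map_of_injective (ris (b ++ [i] ++ b.reverse))
        (⇑(MulAut.conj (s j))) (MulAut.conj (s j)).injective t'
      have h1 : (MulAut.conj (s j)) t' = s j * t' * s j := by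
        rw [MulAut.conj_apply, cs.inv_simple]
      rw [h1] at h0
      exact h0
    rw [hmapcount]
    simp only [beq_iff_eq, cond1_iff' (s j) t' (cs.simple_mul_simple_self j),
      cond2_iff' (s j) t' (cs.simple_mul_simple_self j)]
    have hodd := ih
    rw [Nat.odd_iff] at hodd ⊢
    split_ifs <;> omega

lemma strong_exchange (l : List B) (hl : cs.IsReduced l) {t : W} (ht : cs.IsReflection t)
    (hlt : ℓ (π l * t) < ℓ (π l)) :
    ∃ k, k < l.length ∧ π (l.eraseIdx k) = π l * t := by
  have hmem : t ∈ ris l := by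
    by_contra hmem
    obtain ⟨l', hl'red, hl'⟩ := cs.exists_reduced_word' (π l * t)
    obtain ⟨w, ii, hw⟩ := ht
    obtain ⟨a, ha⟩ := cs.wordProd_surjective w
    have hπρ : π (a ++ [ii] ++ a.reverse) = t := by
      rw [cs.wordProd_append, cs.wordProd_append, cs.wordProd_reverse, cs.wordProd_singleton,
        ha, hw]
    have htt : t * t = 1 := by
      have : cs.IsReflection t := ⟨w, ii, hw⟩
      exact this.mul_self
    have hword : π (l' ++ (a ++ [ii] ++ a.reverse)) = π l := by
      rw [cs.wordProd_append, hπρ, ← hl', mul_assoc, htt, mul_one]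
    have hpar := count_ris_parity cs hword t
    rw [rightInvSeq_append cs, List.count_append] at hpar
    have hcmap : ((ris l').map
        (fun x => (π (a ++ [ii] ++ a.reverse))⁻¹ * x * π (a ++ [ii] ++ a.reverse))).count t
        = (ris l').count t := by
      rw [hπρ]
      have h0 := List.count_map_of_injective (ris l')
        (fun x : W => t⁻¹ * x * t)
        (by intro y z h; simp only at h; exact mul_left_cancel (mul_right_cancel h)) t
      have h1 : t⁻¹ * t * t = t := by
        rw [inv_mul_cancel, one_mul]
      rw [h1] at h0
      exact h0
    rw [hcmap] at hpar
    have hρodd : Odd ((ris (a ++ [ii] ++ a.reverse)).count t) := by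
      have := odd_count_ris_palindrome cs a ii
      rwa [ha, ← hw] at this
    have hl0 : (ris l).count t = 0 := List.count_eq_zero.mpr hmem
    rw [hl0] at hpar
    have hl'odd : Odd ((ris l').count t) := by
      have hmod := (ZMod.natCast_eq_natCast_iff _ _ _).mp hpar
      have hmod2 : ((ris l').count t + (ris (a ++ [ii] ++ a.reverse)).count t) % 2 = 0 % 2 :=
        hmod
      rw [Nat.odd_iff] at hρodd ⊢
      omega
    have hmem' : t ∈ ris l' := by
      by_contra h
      rw [List.count_eq_zero.mpr h, Nat.odd_iff] at hl'odd
      omega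
    have hinv' := (cs.isRightInversion_of_mem_rightInvSeq hl'red hmem').2
    rw [← hl', mul_assoc, htt, mul_one] at hinv'
    omega
  obtain ⟨k, hk, hkt⟩ := List.getElem_of_mem hmem
  rw [cs.length_rightInvSeq] at hk
  refine ⟨k, hk, ?_⟩
  have hgetD : (ris l).getD k 1 = t := by
    rw [List.getD_eq_getElem _ _ (by rw [cs.length_rightInvSeq]; exact hk)]
    exact hkt
  rw [← cs.wordProd_mul_getD_rightInvSeq, hgetD]

lemma exists_reduced_sublist (ω : List B) :
    ∃ ω', ω'.Sublist ω ∧ π ω' = π ω ∧ cs.IsReduced ω' := by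
  induction ω using List.reverseRecOn with
  | nil =>
    refine ⟨[], List.Sublist.refl _, rfl, ?_⟩
    show ℓ (π ([] : List B)) = ([] : List B).length
    simp
  | append_singleton ω₁ i ih =>
    obtain ⟨γ, hsub, hprod, hred⟩ := ih
    have hred' : ℓ (π γ) = γ.length := hred
    have hπγi : π (γ ++ [i]) = π γ * s i := by
      rw [cs.wordProd_append, cs.wordProd_singleton]
    by_cases hc : cs.IsReduced (γ ++ [i])
    · refine ⟨γ ++ [i], hsub.append (List.Sublist.refl [i]), ?_, hc⟩
      rw [hπγi, cs.wordProd_append, cs.wordProd_singleton, hprod]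
    · have hlen : ℓ (π γ * s i) < ℓ (π γ) := by
        rcases cs.length_mul_simple (π γ) i with h | h
        · exfalso
          apply hc
          show ℓ (π (γ ++ [i])) = (γ ++ [i]).length
          rw [hπγi, h, List.length_append]
          simp [hred']
        · have hne := cs.length_mul_simple_ne (π γ) i
          omega
      obtain ⟨k, hk, hkprod⟩ := strong_exchange cs γ hred (cs.isReflection_simple i) hlen
      refine ⟨γ.eraseIdx k, ?_, ?_, ?_⟩
      · exact ((γ.eraseIdx_sublist k).trans hsub).trans (List.sublist_append_left ω₁ [i])
      · rw [hkprod, cs.wordProd_append, cs.wordProd_singleton, hprod]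
      · show ℓ (π (γ.eraseIdx k)) = (γ.eraseIdx k).length
        rw [hkprod]
        have hlen2 : ℓ (π γ * s i) + 1 = ℓ (π γ) := by
          rcases cs.length_mul_simple (π γ) i with h | h
          · omega
          · omega
        have he : (γ.eraseIdx k).length + 1 = γ.length :=
          List.length_eraseIdx_add_one hk
        omega

def ChainStep (u w : W) : Prop := ∃ t : W, cs.IsReflection t ∧ w = u * t ∧ ℓ u < ℓ w

def ChainLe : W → W → Prop := Relation.ReflTransGen (ChainStep cs)

lemma chainStep_inv {u w : W} (h : ChainStep cs u w) : ChainStep cs u⁻¹ w⁻¹ := by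
  obtain ⟨t, ht, rfl, hlen⟩ := h
  refine ⟨u * t * u⁻¹, ht.conj u, ?_, ?_⟩
  · rw [mul_inv_rev, ht.inv]
    group
  · rw [cs.length_inv, cs.length_inv]
    exact hlen

lemma chainLe_inv {u w : W} (h : ChainLe cs u w) : ChainLe cs u⁻¹ w⁻¹ := by
  induction h with
  | refl => exact Relation.ReflTransGen.refl
  | tail hab hbc ih => exact ih.tail (chainStep_inv cs hbc)

lemma zprop_step {b c : W} (h : ChainStep cs b c) (i : B) :
    ChainLe cs (b * s i) c ∨ ChainLe cs (b * s i) (c * s i) := by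
  obtain ⟨t, ht, rfl, hlen⟩ := h
  rcases lt_or_gt_of_ne (cs.length_mul_simple_ne b i) with hbs | hbs
  · left
    have h1 : ChainStep cs (b * s i) b := by
      refine ⟨s i, cs.isReflection_simple i, ?_, hbs⟩
      rw [mul_assoc, cs.simple_mul_simple_self, mul_one]
    exact (Relation.ReflTransGen.single h1).tail ⟨t, ht, rfl, hlen⟩
  · have hbs1 : ℓ (b * s i) = ℓ b + 1 := by
      rcases cs.length_mul_simple b i with h | h <;> omega
    set t' : W := s i * t * s i with ht'def
    have ht' : cs.IsReflection t' := by
      have := ht.conj (s i)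
      rwa [cs.inv_simple] at this
    have hcs : (b * t) * s i = (b * s i) * t' := by
      rw [ht'def]
      calc (b * t) * s i = b * ((s i * s i) * (t * s i)) := by
            rw [cs.simple_mul_simple_self, one_mul, ← mul_assoc]
        _ = (b * s i) * (s i * t * s i) := by group
    rcases lt_or_gt_of_ne (cs.length_mul_simple_ne (b * t) i) with hcs' | hcs'
    · have hpar : ℓ (b * s i) ≠ ℓ ((b * t) * s i) := by
        rw [hcs]
        exact (ht'.length_mul_left_ne (b * s i)).symm
      rcases lt_or_gt_of_ne hpar with hlt2 | hgt2
      · right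
        exact Relation.ReflTransGen.single ⟨t', ht', hcs, hlt2⟩
      · left
        obtain ⟨e, hered, he⟩ := cs.exists_reduced_word' ((b * t) * s i)
        have hered' : ℓ ((b * t) * s i) = e.length := by rw [he]; exact hered
        have heli : π (e ++ [i]) = b * t := by
          rw [cs.wordProd_append, cs.wordProd_singleton, ← he, mul_assoc,
            cs.simple_mul_simple_self, mul_one]
        have hbtlen : ℓ ((b * t) * s i) + 1 = ℓ (b * t) := by
          rcases cs.length_mul_simple (b * t) i with h | h <;> omega
        have heredli : cs.IsReduced (e ++ [i]) := by
          show ℓ (π (e ++ [i])) = (e ++ [i]).length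
          rw [heli, List.length_append]
          simp only [List.length_singleton]
          omega
        have hinv : ℓ (π (e ++ [i]) * t) < ℓ (π (e ++ [i])) := by
          rw [heli, mul_assoc, ht.mul_self, mul_one]
          exact hlen
        obtain ⟨k, hk, hkprod⟩ := strong_exchange cs (e ++ [i]) heredli ht hinv
        have hkb : π ((e ++ [i]).eraseIdx k) = b := by
          rw [hkprod, heli, mul_assoc, ht.mul_self, mul_one]
        by_cases hke : k < e.length
        · exfalso
          have h1 : (e ++ [i]).eraseIdx k = e.eraseIdx k ++ [i] :=
            List.eraseIdx_append_of_lt_length hke [i]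
          have h2 : b * s i = π (e.eraseIdx k) := by
            have h3 := hkb
            rw [h1, cs.wordProd_append, cs.wordProd_singleton] at h3
            rw [← h3, mul_assoc, cs.simple_mul_simple_self, mul_one]
          have h3 : ℓ (b * s i) ≤ (e.eraseIdx k).length := by
            rw [h2]; exact cs.length_wordProd_le _
          have h4 : (e.eraseIdx k).length + 1 = e.length := List.length_eraseIdx_add_one hke
          omega
        · have hkeq : k = e.length := by
            have h5 : k < (e ++ [i]).length := hk
            rw [List.length_append] at h5
            simp only [List.length_singleton] at h5
            omega
          have h1 : (e ++ [i]).eraseIdx k = e := by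
            rw [List.eraseIdx_append_of_length_le (by omega) [i], hkeq]
            simp
          have h2 : b = π e := by rw [← hkb, h1]
          have h4 : b = (b * t) * s i := h2.trans he.symm
          have h5 := congrArg (fun z => z * s i) h4
          rw [mul_assoc (b * t), cs.simple_mul_simple_self, mul_one] at h5
          rw [h5]
          exact Relation.ReflTransGen.refl
    · right
      refine Relation.ReflTransGen.single ⟨t', ht', hcs, ?_⟩
      omega

lemma zprop {u w : W} (h : ChainLe cs u w) (i : B) :
    ChainLe cs (u * s i) w ∨ ChainLe cs (u * s i) (w * s i) := by
  induction h with
  | refl => exact Or.inr Relation.ReflTransGen.refl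
  | tail hab hbc ih =>
    rename_i b c
    rcases ih with h1 | h1
    · exact Or.inl (h1.tail hbc)
    · rcases zprop_step cs hbc i with h2 | h2
      · exact Or.inl (h1.trans h2)
      · exact Or.inr (h1.trans h2)

lemma zprop_left {u w : W} (h : ChainLe cs u w) (i : B) :
    ChainLe cs (s i * u) w ∨ ChainLe cs (s i * u) (s i * w) := by
  have h1 := chainLe_inv cs h
  rcases zprop cs h1 i with h2 | h2
  · left
    have := chainLe_inv cs h2
    rwa [mul_inv_rev, cs.inv_simple, inv_inv, inv_inv] at this
  · right
    have := chainLe_inv cs h2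
    rwa [mul_inv_rev, mul_inv_rev, cs.inv_simple, inv_inv, inv_inv] at this

lemma isReduced_tail {i : B} {l : List B} (h : cs.IsReduced (i :: l)) : cs.IsReduced l := by
  have := IsReduced.drop (ω := i :: l) h 1
  simpa using this

lemma sublist_chainLe : ∀ (l l' : List B), cs.IsReduced l → l'.Sublist l →
    ChainLe cs (π l') (π l) := by
  intro l
  induction l with
  | nil =>
    intro l' _ hsub
    rw [List.sublist_nil.mp hsub]
    exact Relation.ReflTransGen.refl
  | cons i l₁ ih =>
    intro l' hred hsub
    have hred₁ : cs.IsReduced l₁ := isReduced_tail cs hred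
    have hlen1 : ℓ (π (i :: l₁)) = l₁.length + 1 := by
      have h1 : ℓ (π (i :: l₁)) = (i :: l₁).length := hred
      simpa using h1
    have hstep : ChainLe cs (π l₁) (π (i :: l₁)) := by
      refine Relation.ReflTransGen.single ⟨(π l₁)⁻¹ * s i * π l₁, ?_, ?_, ?_⟩
      · exact ⟨(π l₁)⁻¹, i, by rw [inv_inv]⟩
      · rw [cs.wordProd_cons]; group
      · have h2 : ℓ (π l₁) ≤ l₁.length := cs.length_wordProd_le l₁
        omega
    rcases List.sublist_cons_iff.mp hsub with h | ⟨r, rfl, hr⟩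
    · exact (ih l' hred₁ h).trans hstep
    · have hchain := ih r hred₁ hr
      rcases zprop_left cs hchain i with h1 | h1
      · rw [← cs.wordProd_cons] at h1
        exact h1.trans hstep
      · rw [← cs.wordProd_cons, ← cs.wordProd_cons] at h1
        exact h1

lemma chainLe_subword {u w : W} (h : ChainLe cs u w) :
    ∀ l : List B, cs.IsReduced l → π l = w →
      ∃ l', l'.Sublist l ∧ π l' = u ∧ cs.IsReduced l' := by
  induction h with
  | refl =>
    intro l hred hl
    exact ⟨l, List.Sublist.refl _, hl, hred⟩
  | tail hab hbc ih =>
    rename_i b c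
    intro l hred hl
    obtain ⟨t, ht, rfl, hlen⟩ := hbc
    have hbt : π l * t = b := by
      rw [hl, mul_assoc, ht.mul_self, mul_one]
    have hlt : ℓ (π l * t) < ℓ (π l) := by
      rw [hbt, hl]
      exact hlen
    obtain ⟨k, hk, hkprod⟩ := strong_exchange cs l hred ht hlt
    obtain ⟨m, hmsub, hmprod, hmred⟩ := exists_reduced_sublist cs (l.eraseIdx k)
    rw [hkprod, hbt] at hmprod
    obtain ⟨l', hsub', hprod', hred'⟩ := ih m hmred hmprod
    exact ⟨l', (hsub'.trans hmsub).trans (l.eraseIdx_sublist k), hprod', hred'⟩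

lemma subword_transfer {u : W} {l₀ l₀' l : List B} (hred₀ : cs.IsReduced l₀)
    (hsub₀ : l₀'.Sublist l₀) (hu : π l₀' = u) (hred : cs.IsReduced l) (hl : π l = π l₀) :
    ∃ l', l'.Sublist l ∧ π l' = u := by
  have hchain : ChainLe cs u (π l₀) := by
    rw [← hu]
    exact sublist_chainLe cs l₀ l₀' hred₀ hsub₀
  obtain ⟨l', h1, h2, _⟩ := chainLe_subword cs hchain l hred hl
  exact ⟨l', h1, h2⟩

lemma simple_mem_parabolic {J : Set B} {j : B} (hj : j ∈ J) :
    s j ∈ parabolicSubgroup cs J :=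
  Subgroup.subset_closure ⟨j, hj, rfl⟩

lemma wordProd_mem_parabolic {J : Set B} {c : List B} (hc : ∀ i ∈ c, i ∈ J) :
    π c ∈ parabolicSubgroup cs J := by
  induction c with
  | nil => simp only [cs.wordProd_nil]; exact one_mem _
  | cons i c ih =>
    rw [cs.wordProd_cons]
    exact mul_mem (simple_mem_parabolic cs (hc i (List.mem_cons_self (a := i) (l := c)))) 
      (ih fun i hi => hc i (List.mem_cons_of_mem _ hi))

lemma exists_jword {J : Set B} {d : W} (hd : d ∈ parabolicSubgroup cs J) :
    ∃ c : List B, (∀ i ∈ c, i ∈ J) ∧ π c = d := by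
  induction hd using Subgroup.closure_induction with
  | mem x hx =>
    obtain ⟨i, hi, rfl⟩ := hx
    exact ⟨[i], by simpa using hi, cs.wordProd_singleton i⟩
  | one => exact ⟨[], by simp, cs.wordProd_nil⟩
  | mul x y _ _ hx hy =>
    obtain ⟨c₁, h₁, hp₁⟩ := hx
    obtain ⟨c₂, h₂, hp₂⟩ := hy
    refine ⟨c₁ ++ c₂, ?_, ?_⟩
    · intro i hi
      rcases List.mem_append.mp hi with h | h
      · exact h₁ i h
      · exact h₂ i h
    · rw [cs.wordProd_append, hp₁, hp₂]
  | inv x _ hx =>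
    obtain ⟨c₁, h₁, hp₁⟩ := hx
    refine ⟨c₁.reverse, ?_, ?_⟩
    · intro i hi
      exact h₁ i (List.mem_reverse.mp hi)
    · rw [cs.wordProd_reverse, hp₁]

lemma exists_reduced_jword {J : Set B} {d : W} (hd : d ∈ parabolicSubgroup cs J) :
    ∃ c : List B, (∀ i ∈ c, i ∈ J) ∧ π c = d ∧ cs.IsReduced c := by
  obtain ⟨c₀, hc₀J, hc₀⟩ := exists_jword cs hd
  obtain ⟨c, hsub, hprod, hred⟩ := exists_reduced_sublist cs c₀
  exact ⟨c, fun i hi => hc₀J i (hsub.subset hi), hprod.trans hc₀, hred⟩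

lemma isMinRep_length_mul {J : Set B} {u : W} (hu : IsMinRep cs J u) :
    ∀ d ∈ parabolicSubgroup cs J, ℓ (u * d) = ℓ u + ℓ d := by
  suffices H : ∀ n, ∀ d ∈ parabolicSubgroup cs J, ℓ d ≤ n → ℓ (u * d) = ℓ u + ℓ d by
    intro d hd
    exact H (ℓ d) d hd le_rfl
  intro n
  induction n with
  | zero =>
    intro d hd hdn
    have : d = 1 := cs.length_eq_zero_iff.mp (Nat.le_zero.mp hdn)
    simp [this]
  | succ n ih =>
    intro d hd hdn
    by_cases hd1 : d = 1
    · simp [hd1]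
    obtain ⟨c, hcJ, hcprod, hcred⟩ := exists_reduced_jword cs hd
    have hcne : c ≠ [] := by
      intro h
      rw [h, cs.wordProd_nil] at hcprod
      exact hd1 hcprod.symm
    set j := c.getLast hcne with hj
    set c₁ := c.dropLast with hc₁
    have hcdec : c₁ ++ [j] = c := List.dropLast_append_getLast hcne
    have hjJ : j ∈ J := hcJ j (List.getLast_mem hcne)
    have hc₁red : cs.IsReduced c₁ := by
      rw [hc₁, List.dropLast_eq_take]
      exact IsReduced.take hcred _
    set d' := π c₁ with hd'
    have hd'P : d' ∈ parabolicSubgroup cs J := by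
      refine wordProd_mem_parabolic cs fun i hi => hcJ i ?_
      exact (List.dropLast_sublist c).subset hi
    have hdd' : d = d' * s j := by
      rw [← hcprod, ← hcdec, cs.wordProd_append, cs.wordProd_singleton]
    have hlc : ℓ d = c.length := by rw [← hcprod]; exact hcred
    have hlc₁ : ℓ d' = c₁.length := hc₁red
    have hlen' : ℓ d' + 1 = ℓ d := by
      rw [hlc, hlc₁, ← hcdec, List.length_append]
      simp
    have ihd' : ℓ (u * d') = ℓ u + ℓ d' := ih d' hd'P (by omega)
    -- now show ℓ (u * d' * s j) = ℓ (u * d') + 1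
    have hgoal : ℓ ((u * d') * s j) = ℓ (u * d') + 1 := by
      rcases cs.length_mul_simple (u * d') j with h | h
      · exact h
      · exfalso
        -- exchange
        obtain ⟨a, hared, hau⟩ := cs.exists_reduced_word' u
        have hala : ℓ u = a.length := by rw [hau]; exact hared
        have hword : π (a ++ c₁) = u * d' := by
          rw [cs.wordProd_append, ← hau, hd']
        have hwred : cs.IsReduced (a ++ c₁) := by
          show ℓ (π (a ++ c₁)) = (a ++ c₁).length
          rw [hword, List.length_append, ihd', hala, hlc₁]
        have hlt : ℓ (π (a ++ c₁) * s j) < ℓ (π (a ++ c₁)) := by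
          rw [hword]
          omega
        obtain ⟨k, hk, hkprod⟩ := strong_exchange cs (a ++ c₁) hwred
          (cs.isReflection_simple j) hlt
        rw [hword] at hkprod
        by_cases hka : k < a.length
        · have h1 : (a ++ c₁).eraseIdx k = a.eraseIdx k ++ c₁ :=
            List.eraseIdx_append_of_lt_length hka c₁
          have h3 := hkprod
          rw [h1, cs.wordProd_append, ← hd'] at h3
          have h2 : π (a.eraseIdx k) = u * (d' * s j * d'⁻¹) := by
            calc π (a.eraseIdx k) = (π (a.eraseIdx k) * d') * d'⁻¹ := by group
              _ = (u * d' * s j) * d'⁻¹ := by rw [h3]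
              _ = u * (d' * s j * d'⁻¹) := by group
          have hg : d' * s j * d'⁻¹ ∈ parabolicSubgroup cs J :=
            mul_mem (mul_mem hd'P (simple_mem_parabolic cs hjJ)) (inv_mem hd'P)
          have hmin := hu (u * (d' * s j * d'⁻¹)) (by
            have heq : u⁻¹ * (u * (d' * s j * d'⁻¹)) = d' * s j * d'⁻¹ := by group
            rw [heq]
            exact hg)
          have hle := cs.length_wordProd_le (a.eraseIdx k)
          rw [h2] at hle
          have h4 : (a.eraseIdx k).length + 1 = a.length := List.length_eraseIdx_add_one hka
          omega
        · have h1 : (a ++ c₁).eraseIdx k = a ++ c₁.eraseIdx (k - a.length) :=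
            List.eraseIdx_append_of_length_le (le_of_not_gt hka) _
          have h3 := hkprod
          rw [h1, cs.wordProd_append, ← hau, mul_assoc] at h3
          have h4 : π (c₁.eraseIdx (k - a.length)) = d' * s j := mul_left_cancel h3
          have h5 : ℓ (d' * s j) ≤ (c₁.eraseIdx (k - a.length)).length := by
            rw [← h4]
            exact cs.length_wordProd_le _
          have h6 : (c₁.eraseIdx (k - a.length)).length ≤ c₁.length :=
            (List.eraseIdx_sublist _ _).length_le
          rw [← hdd'] at h5
          have h7 : c.length = c₁.length + 1 := by
            rw [← hcdec]
            simp
          omega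
    have h8 : ℓ (d' * s j) = ℓ d' + 1 := by
      rw [← hdd']
      omega
    rw [hdd', ← mul_assoc, hgoal, ihd', h8]
    omega

lemma minRep_unique {J : Set B} {u₁ u₂ : W} (h1 : IsMinRep cs J u₁) (h2 : IsMinRep cs J u₂)
    (hc : u₁⁻¹ * u₂ ∈ parabolicSubgroup cs J) : u₁ = u₂ := by
  have hlen : ℓ u₂ = ℓ u₁ + ℓ (u₁⁻¹ * u₂) := by
    have := isMinRep_length_mul cs h1 (u₁⁻¹ * u₂) hc
    rwa [mul_inv_cancel_left] at this
  have hle1 : ℓ u₁ ≤ ℓ u₂ := h1 u₂ hc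
  have hle2 : ℓ u₂ ≤ ℓ u₁ := h2 u₁ (by
    have := inv_mem hc
    rwa [mul_inv_rev, inv_inv] at this)
  have h0 : ℓ (u₁⁻¹ * u₂) = 0 := by omega
  have h0' := cs.length_eq_zero_iff.mp h0
  have h9 := congrArg (fun z => u₁ * z) h0'
  simp only [mul_one, mul_inv_cancel_left] at h9
  exact h9.symm

lemma exists_descent {J : Set B} {u x : W} (hu : IsMinRep cs J u)
    (hx : x⁻¹ * u ∈ parabolicSubgroup cs J) (hne : x ≠ u) :
    ∃ j ∈ J, ℓ (x * s j) < ℓ x := by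
  have hdP : u⁻¹ * x ∈ parabolicSubgroup cs J := by
    have := inv_mem hx
    rwa [mul_inv_rev, inv_inv] at this
  set d := u⁻¹ * x with hddef
  have hx' : x = u * d := by rw [hddef]; group
  have hd1 : d ≠ 1 := by
    intro h
    rw [h, mul_one] at hx'
    exact hne hx'
  obtain ⟨c, hcJ, hcprod, hcred⟩ := exists_reduced_jword cs hdP
  have hcne : c ≠ [] := by
    intro h
    rw [h, cs.wordProd_nil] at hcprod
    exact hd1 hcprod.symm
  set j := c.getLast hcne with hjdef
  refine ⟨j, hcJ j (List.getLast_mem hcne), ?_⟩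
  set c₁ := c.dropLast with hc₁def
  have hcdec : c₁ ++ [j] = c := List.dropLast_append_getLast hcne
  have hc₁red : cs.IsReduced c₁ := by
    rw [hc₁def, List.dropLast_eq_take]
    exact IsReduced.take hcred _
  have hdsj : d * s j = π c₁ := by
    rw [← hcprod, ← hcdec, cs.wordProd_append, cs.wordProd_singleton, mul_assoc,
      cs.simple_mul_simple_self, mul_one]
  have hdsjP : d * s j ∈ parabolicSubgroup cs J := by
    rw [hdsj]
    exact wordProd_mem_parabolic cs fun i hi => hcJ i ((List.dropLast_sublist c).subset hi)
  have h1 : ℓ (u * (d * s j)) = ℓ u + ℓ (d * s j) := isMinRep_length_mul cs hu _ hdsjP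
  have h2 : ℓ (u * d) = ℓ u + ℓ d := isMinRep_length_mul cs hu d hdP
  have h3 : ℓ (d * s j) < ℓ d := by
    have e1 : ℓ (d * s j) = c₁.length := by rw [hdsj]; exact hc₁red
    have e2 : ℓ d = c.length := by rw [← hcprod]; exact hcred
    have e3 : c.length = c₁.length + 1 := by rw [← hcdec]; simp
    omega
  have h4 : x * s j = u * (d * s j) := by rw [hx', mul_assoc]
  rw [h4, hx', h1, h2]
  omega

lemma minRep_subword {J : Set B} {u : W} (hu : IsMinRep cs J u) :
    ∀ m : List B, (π m)⁻¹ * u ∈ parabolicSubgroup cs J →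
      ∃ m', m'.Sublist m ∧ π m' = u := by
  suffices H : ∀ n, ∀ m : List B, m.length ≤ n → (π m)⁻¹ * u ∈ parabolicSubgroup cs J →
      ∃ m', m'.Sublist m ∧ π m' = u by
    intro m hm
    exact H m.length m le_rfl hm
  intro n
  induction n with
  | zero =>
    intro m hm hmem
    have hm0 : m = [] := List.eq_nil_of_length_eq_zero (Nat.le_zero.mp hm)
    subst hm0
    rw [cs.wordProd_nil, inv_one, one_mul] at hmem
    have h1 : ℓ u ≤ ℓ (1 : W) := hu 1 (by rw [mul_one]; exact inv_mem hmem)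
    rw [cs.length_one] at h1
    have hu1 : u = 1 := cs.length_eq_zero_iff.mp (Nat.le_zero.mp h1)
    exact ⟨[], List.Sublist.refl _, by rw [cs.wordProd_nil, hu1]⟩
  | succ n ih =>
    intro m hm hmem
    obtain ⟨mh, hsub, hprod, hred⟩ := exists_reduced_sublist cs m
    by_cases heq : π m = u
    · exact ⟨mh, hsub, hprod.trans heq⟩
    · obtain ⟨j, hjJ, hdesc⟩ := exists_descent cs hu hmem heq
      rw [← hprod] at hdesc
      obtain ⟨k, hk, hkprod⟩ := strong_exchange cs mh hred (cs.isReflection_simple j) hdesc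
      have hmem' : (π (mh.eraseIdx k))⁻¹ * u ∈ parabolicSubgroup cs J := by
        rw [hkprod, hprod, mul_inv_rev, cs.inv_simple, mul_assoc]
        exact mul_mem (simple_mem_parabolic cs hjJ) hmem
      have hlen' : (mh.eraseIdx k).length ≤ n := by
        have e1 := List.length_eraseIdx_add_one hk
        have e2 := hsub.length_le
        omega
      obtain ⟨e, he1, he2⟩ := ih (mh.eraseIdx k) hlen' hmem'
      exact ⟨e, (he1.trans (mh.eraseIdx_sublist k)).trans hsub, he2⟩

end CoxAux

/-- Let `v ∈ W^I` and `t ∈ D_R(v)`.  Then among all `u ∈ W^{I ∪ {t}}` with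
`u ≤ v` in Bruhat order there is a unique maximal one, namely the minimal-length
representative `vmin` of the coset `v W_{I ∪ {t}}`:  `vmin ≤ v`, and every
`u ∈ W^{I ∪ {t}}` with `u ≤ v` satisfies `u ≤ vmin`. -/
theorem unique_max_below_in_larger_parabolic (I : Set B) (t : B) (v vmin : W)
    (hv : IsMinRep cs I v) (ht : cs.IsRightDescent v t)
    (hmem : v⁻¹ * vmin ∈ parabolicSubgroup cs (I ∪ {t}))
    (hmin : IsMinRep cs (I ∪ {t}) vmin) :
    BruhatLe cs vmin v ∧
      ∀ u : W, IsMinRep cs (I ∪ {t}) u → BruhatLe cs u v → BruhatLe cs u vmin := by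
  constructor
  · obtain ⟨l, hlred, hlv⟩ := cs.exists_reduced_word' v
    have hmem' : (cs.wordProd l)⁻¹ * vmin ∈ parabolicSubgroup cs (I ∪ {t}) := by
      rw [← hlv]
      exact hmem
    obtain ⟨l', hsub, hprod⟩ := CoxAux.minRep_subword cs hmin l hmem'
    exact ⟨l, l', ⟨hlv.symm, hlred⟩, hsub, hprod⟩
  · intro u hureps hule
    obtain ⟨l, l', ⟨hlv, hlred⟩, hsub, hprod⟩ := hule
    obtain ⟨a, hared, hav⟩ := cs.exists_reduced_word' vmin
    have hdP : vmin⁻¹ * v ∈ parabolicSubgroup cs (I ∪ {t}) := by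
      have := inv_mem hmem
      rwa [mul_inv_rev, inv_inv] at this
    obtain ⟨c, hcJ, hcprod, hcred⟩ := CoxAux.exists_reduced_jword cs hdP
    have hacv : cs.wordProd (a ++ c) = v := by
      rw [cs.wordProd_append, ← hav, hcprod, mul_inv_cancel_left]
    have haclen : cs.IsReduced (a ++ c) := by
      show cs.length (cs.wordProd (a ++ c)) = (a ++ c).length
      rw [hacv, List.length_append]
      have h1 : cs.length v = cs.length vmin + cs.length (vmin⁻¹ * v) := by
        have := CoxAux.isMinRep_length_mul cs hmin (vmin⁻¹ * v) hdP
        rwa [mul_inv_cancel_left] at this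
      have h2 : cs.length vmin = a.length := by rw [hav]; exact hared
      have h3 : cs.length (vmin⁻¹ * v) = c.length := by rw [← hcprod]; exact hcred
      omega
    obtain ⟨d', hd'sub, hd'prod⟩ := CoxAux.subword_transfer cs hlred hsub hprod haclen
      (by rw [hacv, hlv])
    obtain ⟨d₁, d₂, hdsplit, hd₁, hd₂⟩ := List.sublist_append_iff.mp hd'sub
    have hd₂P : cs.wordProd d₂ ∈ parabolicSubgroup cs (I ∪ {t}) :=
      CoxAux.wordProd_mem_parabolic cs fun i hi => hcJ i (hd₂.subset hi)
    have humem : (cs.wordProd d₁)⁻¹ * u ∈ parabolicSubgroup cs (I ∪ {t}) := by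
      have hueq : u = cs.wordProd d₁ * cs.wordProd d₂ := by
        rw [← cs.wordProd_append, ← hdsplit, hd'prod]
      rw [hueq, inv_mul_cancel_left]
      exact hd₂P
    obtain ⟨e, he1, he2⟩ := CoxAux.minRep_subword cs hureps d₁ humem
    exact ⟨a, e, ⟨hav.symm, hared⟩, he1.trans hd₁, he2⟩
end

section
/- Let W be a Weyl group with simple roots Δ, let I ⊆ S, and let u < v be elements of W^I with ℓ(v) = ℓ(u) + 1, so v = u·s_β for some positive root β. Then β ∉ R_I, and consequently there exists a simple root α ∈ Δ \ Δ_I such that ω_α(β^∨) ≠ 0, where ω_α is the fundamental weight corresponding to α. -/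
open CoxeterSystem

variable {B W : Type*} [Group W] {M : CoxeterMatrix B} (cs : CoxeterSystem M W)

/-- `a` is a Cartan matrix. -/
def IsCartanMatrix (a : B → B → ℤ) : Prop :=
  (∀ s, a s s = 2) ∧ (∀ s t, s ≠ t → a s t ∈ ({0, -1, -2, -3} : Set ℤ)) ∧
    ∀ s t, (a s t = 0 ↔ a t s = 0)

/-- The Coxeter matrix `M` is the one associated to the crystallographic Cartan matrix
`a`: `m(s,t) = 2, 3, 4, 6` according to `a_{st}a_{ts} = 0, 1, 2, 3`. -/
def IsCartanMatrixOf (a : B → B → ℤ) (M : CoxeterMatrix B) : Prop :=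
  ∀ s t : B, s ≠ t → M s t =
    (if a s t * a t s = 0 then 2 else if a s t * a t s = 1 then 3
      else if a s t * a t s = 2 then 4 else 6)

/-- The simple reflection `σ_s` acting on the coroot lattice `⨁_{t ∈ S} ℤ α_t^∨`
(coordinates with respect to the simple coroots): `σ_s(v) = v - ⟨v, α_s⟩ α_s^∨`, where
`⟨α_r^∨, α_s⟩ = a r s`.  In particular `σ_s(α_r^∨) = α_r^∨ - a_{rs} α_s^∨`. -/
noncomputable def coreflection (a : B → B → ℤ) (s : B) : Module.End ℤ (B →₀ ℤ) :=
  LinearMap.id - (Finsupp.lsingle s).comp (Finsupp.linearCombination ℤ fun r => a r s)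

namespace CRAux

/-- rank-two coordinate reflections -/
def appI (Q : ℤ) (y : ℤ × ℤ) : ℤ × ℤ := (-y.1 - Q * y.2, y.2)
def appJ (P : ℤ) (y : ℤ × ℤ) : ℤ × ℤ := (y.1, -y.2 - P * y.1)
def TT (P Q : ℤ) (y : ℤ × ℤ) : ℤ × ℤ := appI Q (appJ P y)
def vec (P Q : ℤ) : ℕ → ℤ × ℤ
  | 0 => (1, 0)
  | n+1 => (if n % 2 = 0 then appJ P else appI Q) (vec P Q n)

/-- the pairing `⟨v, α_i⟩`. -/
noncomputable def pF (a : B → B → ℤ) (v : B →₀ ℤ) (i : B) : ℤ :=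
  Finsupp.linearCombination ℤ (fun r => a r i) v

theorem pF_single (a : B → B → ℤ) (r : B) (c : ℤ) (i : B) :
    pF a (Finsupp.single r c) i = c * a r i := by
  simp [pF, Finsupp.linearCombination_single, smul_eq_mul]

theorem pF_add (a : B → B → ℤ) (v w : B →₀ ℤ) (i : B) :
    pF a (v + w) i = pF a v i + pF a w i := by simp [pF]

theorem pF_smul (a : B → B → ℤ) (c : ℤ) (v : B →₀ ℤ) (i : B) :
    pF a (c • v) i = c * pF a v i := by simp [pF]

theorem pF_sub (a : B → B → ℤ) (v w : B →₀ ℤ) (i : B) :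
    pF a (v - w) i = pF a v i - pF a w i := by simp [pF]

theorem coreflection_apply (a : B → B → ℤ) (s : B) (v : B →₀ ℤ) :
    coreflection a s v = v - Finsupp.single s (pF a v s) := by
  simp [coreflection, pF, LinearMap.sub_apply]

/-- the embedding of `ℤ × ℤ` onto the span of `e i`, `e j`. -/
noncomputable def iot (i j : B) (y : ℤ × ℤ) : B →₀ ℤ :=
  y.1 • Finsupp.single i 1 + y.2 • Finsupp.single j 1

theorem iot_apply [DecidableEq B] {i j : B} (hij : i ≠ j) (y : ℤ × ℤ) (b : B) :
    iot i j y b = (if i = b then y.1 else 0) + (if j = b then y.2 else 0) := by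
  simp only [iot, Finsupp.add_apply, Finsupp.smul_apply, Finsupp.single_apply, smul_eq_mul]
  by_cases h1 : i = b <;> by_cases h2 : j = b
  · exact absurd (h1.trans h2.symm) hij
  all_goals simp [h1, h2]

theorem iot_apply_left [DecidableEq B] {i j : B} (hij : i ≠ j) (y : ℤ × ℤ) :
    iot i j y i = y.1 := by simp [iot_apply hij, hij.symm, Ne.symm hij]

theorem iot_apply_right [DecidableEq B] {i j : B} (hij : i ≠ j) (y : ℤ × ℤ) :
    iot i j y j = y.2 := by simp [iot_apply hij, hij]

theorem iot_one_zero [DecidableEq B] {i j : B} (hij : i ≠ j) :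
    iot i j (1, 0) = Finsupp.single i 1 := by
  ext b
  rw [iot_apply hij, Finsupp.single_apply]
  by_cases h1 : i = b <;> by_cases h2 : j = b
  · exact absurd (h1.trans h2.symm) hij
  all_goals simp [h1, h2]

section CM
variable [DecidableEq B] {a : B → B → ℤ} (ha : IsCartanMatrix a)

include ha

theorem pF_iot {i j : B} (y : ℤ × ℤ) (c : B) :
    pF a (iot i j y) c = y.1 * a i c + y.2 * a j c := by
  rw [iot, pF_add, pF_smul, pF_smul, pF_single, pF_single]; ring

theorem creflect_iot_i {i j : B} (hij : i ≠ j) (y : ℤ × ℤ) :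
    coreflection a i (iot i j y) = iot i j (appI (a j i) y) := by
  have h2 := ha.1 i
  ext b
  rw [coreflection_apply, Finsupp.sub_apply, iot_apply hij, iot_apply hij,
    pF_iot ha, Finsupp.single_apply, h2, appI]
  by_cases h1 : i = b <;> by_cases hb2 : j = b
  · exact absurd (h1.trans hb2.symm) hij
  all_goals simp [h1, hb2] <;> ring

theorem creflect_iot_j {i j : B} (hij : i ≠ j) (y : ℤ × ℤ) :
    coreflection a j (iot i j y) = iot i j (appJ (a i j) y) := by
  have h2 := ha.1 j
  ext b
  rw [coreflection_apply, Finsupp.sub_apply, iot_apply hij, iot_apply hij,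
    pF_iot ha, Finsupp.single_apply, h2, appJ]
  by_cases h1 : i = b <;> by_cases hb2 : j = b
  · exact absurd (h1.trans hb2.symm) hij
  all_goals simp [h1, hb2] <;> ring

end CM


section Rep

variable [DecidableEq B] {a : B → B → ℤ}
variable {ρ : W →* Module.End ℤ (B →₀ ℤ)}

theorem greedy (i j : B) : ∀ (n : ℕ) (w : W), cs.length w = n →
    ∃ (v : W) (d : List B), w = v * cs.wordProd d ∧
      cs.length w = cs.length v + d.length ∧ (∀ r ∈ d, r = i ∨ r = j) ∧
      ¬cs.IsRightDescent v i ∧ ¬cs.IsRightDescent v j := by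
  intro n
  induction n using Nat.strong_induction_on with
  | _ n IH =>
    intro w hw
    by_cases hdi : cs.IsRightDescent w i
    · have hlen : cs.length (w * cs.simple i) + 1 = cs.length w := cs.isRightDescent_iff.mp hdi
      obtain ⟨v, d, h1, h2, h3, h4, h5⟩ := IH (cs.length (w * cs.simple i)) (by omega) _ rfl
      refine ⟨v, d ++ [i], ?_, ?_, ?_, h4, h5⟩
      · rw [cs.wordProd_append, cs.wordProd_singleton, ← mul_assoc, ← h1,
          cs.simple_mul_simple_cancel_right]
      · simp only [List.length_append, List.length_singleton]; omega
      · intro r hr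
        rcases List.mem_append.mp hr with h | h
        · exact h3 r h
        · left; simpa using h
    · by_cases hdj : cs.IsRightDescent w j
      · have hlen : cs.length (w * cs.simple j) + 1 = cs.length w := cs.isRightDescent_iff.mp hdj
        obtain ⟨v, d, h1, h2, h3, h4, h5⟩ := IH (cs.length (w * cs.simple j)) (by omega) _ rfl
        refine ⟨v, d ++ [j], ?_, ?_, ?_, h4, h5⟩
        · rw [cs.wordProd_append, cs.wordProd_singleton, ← mul_assoc, ← h1,
            cs.simple_mul_simple_cancel_right]
        · simp only [List.length_append, List.length_singleton]; omega
        · intro r hr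
          rcases List.mem_append.mp hr with h | h
          · exact h3 r h
          · right; simpa using h
      · exact ⟨w, [], by simp, by simp, by simp, hdi, hdj⟩

theorem exists_adj : ∀ (l : List B), ¬ l.Chain' (· ≠ ·) →
    ∃ (l₁ : List B) (r : B) (l₂ : List B), l = l₁ ++ r :: r :: l₂ := by
  intro l
  induction l with
  | nil => intro h; exact absurd List.isChain_nil h
  | cons x l ih =>
    intro h
    by_cases hc : l.Chain' (· ≠ ·)
    · match l, hc with
      | [], _ => exact absurd (List.isChain_singleton x) h
      | y :: l', hc =>
        rcases eq_or_ne x y with rfl | hxy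
        · exact ⟨[], x, l', rfl⟩
        · exact absurd (List.isChain_cons_cons.mpr ⟨hxy, hc⟩) h
    · obtain ⟨l₁, r, l₂, rfl⟩ := ih hc
      exact ⟨x :: l₁, r, l₂, rfl⟩

theorem chain'_of_reduced {ω : List B} (hred : cs.IsReduced ω) : ω.Chain' (· ≠ ·) := by
  by_contra h
  obtain ⟨l₁, r, l₂, rfl⟩ := exists_adj _ h
  have heq : cs.wordProd (l₁ ++ r :: r :: l₂) = cs.wordProd (l₁ ++ l₂) := by
    rw [cs.wordProd_append, cs.wordProd_append, cs.wordProd_cons, cs.wordProd_cons,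
      cs.simple_mul_simple_cancel_left]
  have h2 := cs.length_wordProd_le (l₁ ++ l₂)
  rw [CoxeterSystem.IsReduced, heq] at hred
  simp only [List.length_append, List.length_cons] at hred h2
  omega

theorem shape {i j : B} (hij : i ≠ j) :
    ∀ (d : List B), (∀ r ∈ d, r = i ∨ r = j) → (d ++ [i]).Chain' (· ≠ ·) →
      d = alternatingWord i j d.length := by
  intro d
  induction d with
  | nil => intro _ _; rfl
  | cons r d ih =>
    intro hmem hch
    have hch' : (d ++ [i]).Chain' (· ≠ ·) := (List.isChain_cons.mp hch).2
    have hhead : ∀ y ∈ (d ++ [i]).head?, r ≠ y := (List.isChain_cons.mp hch).1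
    have hd := ih (fun x hx => hmem x (List.mem_cons_of_mem _ hx)) hch'
    have hr : r = i ∨ r = j := hmem r (List.mem_cons_self)
    cases d with
    | nil =>
      have hri : r ≠ i := hhead i (by simp)
      have hrj : r = j := hr.resolve_left hri
      subst hrj
      simp [alternatingWord]
    | cons x d' =>
      have hx : r ≠ x := hhead x (by simp)
      rw [List.length_cons, alternatingWord_succ'] at hd
      injection hd with hx' hd'
      rw [List.length_cons, List.length_cons, alternatingWord_succ']
      congr 1
      · by_cases hev : Even d'.length
        · rw [if_pos hev] at hx'
          rw [if_neg (by simp [Nat.even_add_one, hev])]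
          rcases hr with h | h
          · exact h
          · exact absurd (h.trans hx'.symm) hx
        · rw [if_neg hev] at hx'
          rw [if_pos (by simp [Nat.even_add_one, hev])]
          rcases hr with h | h
          · exact absurd (h.trans hx'.symm) hx
          · exact h
      · rw [alternatingWord_succ', ← hx', ← hd']

theorem rho_alt (hρ : ∀ s : B, ρ (cs.simple s) = coreflection a s)
    (ha : IsCartanMatrix a) {i j : B} (hij : i ≠ j) (k : ℕ) :
    ρ (cs.wordProd (alternatingWord i j k)) (Finsupp.single i 1) =
      iot i j (vec (a i j) (a j i) k) := by
  induction k with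
  | zero =>
    rw [show alternatingWord i j 0 = [] from rfl, cs.wordProd_nil, map_one]
    rw [show vec (a i j) (a j i) 0 = (1, 0) from rfl, iot_one_zero hij]
    rfl
  | succ k IHk =>
    rw [alternatingWord_succ', cs.wordProd_cons, map_mul, Module.End.mul_apply, IHk]
    by_cases hev : Even k
    · rw [if_pos hev, hρ j, creflect_iot_j ha hij,
        show vec (a i j) (a j i) (k+1) = appJ (a i j) (vec (a i j) (a j i) k) from by
          simp [vec, Nat.even_iff.mp hev]]
    · rw [if_neg hev, hρ i, creflect_iot_i ha hij,
        show vec (a i j) (a j i) (k+1) = appI (a j i) (vec (a i j) (a j i) k) from by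
          simp [vec, Nat.odd_iff.mp (Nat.not_even_iff_odd.mp hev)]]

theorem pow_TT_iot (hρ : ∀ s : B, ρ (cs.simple s) = coreflection a s)
    (ha : IsCartanMatrix a) {i j : B} (hij : i ≠ j) :
    ∀ (n : ℕ) (y : ℤ × ℤ), ((ρ (cs.simple i) * ρ (cs.simple j)) ^ n) (iot i j y) =
      iot i j ((TT (a i j) (a j i))^[n] y) := by
  intro n
  induction n with
  | zero => intro y; simp
  | succ n IHn =>
    intro y
    have hinner : (ρ (cs.simple i) * ρ (cs.simple j)) (iot i j y) =
        iot i j (TT (a i j) (a j i) y) := by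
      rw [Module.End.mul_apply, hρ i, hρ j, creflect_iot_j ha hij, creflect_iot_i ha hij]
      rfl
    rw [pow_succ, Module.End.mul_apply, hinner, IHn, ← Function.iterate_succ_apply]

theorem TT_fix (hρ : ∀ s : B, ρ (cs.simple s) = coreflection a s)
    (ha : IsCartanMatrix a) {i j : B} (hij : i ≠ j) :
    ((TT (a i j) (a j i))^[M i j] (1, 0)).1 = 1 := by
  have hrel := cs.simple_mul_simple_pow i j
  have h1 : ((ρ (cs.simple i) * ρ (cs.simple j)) ^ (M i j)) = 1 := by
    rw [← map_mul, ← map_pow, hrel, map_one]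
  have h2 := congrArg (fun f : Module.End ℤ (B →₀ ℤ) => f (iot i j (1, 0))) h1
  simp only [Module.End.one_apply] at h2
  rw [pow_TT_iot cs hρ ha hij] at h2
  have h3 := congrArg (fun v : B →₀ ℤ => v i) h2
  simpa [iot_apply_left hij] using h3

theorem vec_nonneg (hρ : ∀ s : B, ρ (cs.simple s) = coreflection a s)
    (ha : IsCartanMatrix a) (haM : IsCartanMatrixOf a M) {i j : B} (hij : i ≠ j)
    (k : ℕ) (hk : k + 1 ≤ M i j) :
    0 ≤ (vec (a i j) (a j i) k).1 ∧ 0 ≤ (vec (a i j) (a j i) k).2 := by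
  have hP := ha.2.1 i j hij
  have hQ := ha.2.1 j i hij.symm
  have hPQ := ha.2.2 i j
  have hM := haM i j hij
  have hfix := TT_fix cs hρ ha hij
  simp only [Set.mem_insert_iff, Set.mem_singleton_iff] at hP hQ
  rcases hP with hP|hP|hP|hP <;> rcases hQ with hQ|hQ|hQ|hQ <;>
    rw [hP, hQ] at hM hfix ⊢ <;>
    first
      | (exfalso; rw [hP, hQ] at hPQ; exact absurd (hPQ.mp rfl) (by decide))
      | (exfalso; rw [hP, hQ] at hPQ; exact absurd (hPQ.mpr rfl) (by decide))
      | (norm_num at hM; first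
          | (rw [hM] at hk; replace hk : k ≤ 1 := (by omega);
              interval_cases k <;> exact ⟨by decide, by decide⟩)
          | (rw [hM] at hk; replace hk : k ≤ 2 := (by omega);
              interval_cases k <;> exact ⟨by decide, by decide⟩)
          | (rw [hM] at hk; replace hk : k ≤ 3 := (by omega);
              interval_cases k <;> exact ⟨by decide, by decide⟩)
          | (rw [hM] at hk; replace hk : k ≤ 5 := (by omega);
              interval_cases k <;> exact ⟨by decide, by decide⟩)
          | (exfalso; rw [hM] at hfix; exact absurd hfix (by decide)))


theorem pos_of_not_descent (hρ : ∀ s : B, ρ (cs.simple s) = coreflection a s)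
    (ha : IsCartanMatrix a) (haM : IsCartanMatrixOf a M) :
    ∀ (n : ℕ) (w : W) (i : B), cs.length w = n → ¬cs.IsRightDescent w i →
      ∀ b, 0 ≤ ρ w (Finsupp.single i 1) b := by
  intro n
  induction n using Nat.strong_induction_on with
  | _ n IH =>
    intro w i hw hnd b
    rcases eq_or_ne w 1 with rfl | hw1
    · rw [map_one, Module.End.one_apply, Finsupp.single_apply]
      split <;> norm_num
    · obtain ⟨j, hdj⟩ := cs.exists_rightDescent_of_ne_one hw1
      have hij : i ≠ j := fun h => hnd (h ▸ hdj)
      obtain ⟨v, d, hvd, hlen2, hmem, hnvi, hnvj⟩ := greedy cs i j (cs.length w) w rfl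
      have hdne : d ≠ [] := by
        rintro rfl
        rw [cs.wordProd_nil, mul_one] at hvd
        exact hnvj (hvd ▸ hdj)
      have hdpos : 0 < d.length := List.length_pos_iff.mpr hdne
      have hlv : cs.length v < n := by omega
      have hπd_le := cs.length_wordProd_le d
      have hmul := cs.length_mul_le v (cs.wordProd d)
      rw [← hvd] at hmul
      have hℓπd : cs.length (cs.wordProd d) = d.length := by omega
      have hndw : cs.length (w * cs.simple i) = cs.length w + 1 :=
        cs.not_isRightDescent_iff.mp hnd
      have hwp : cs.wordProd (d ++ [i]) = cs.wordProd d * cs.simple i := by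
        rw [cs.wordProd_append, cs.wordProd_singleton]
      have h3 : w * cs.simple i = v * cs.wordProd (d ++ [i]) := by
        rw [hwp, ← mul_assoc, ← hvd]
      have hπdi_le := cs.length_wordProd_le (d ++ [i])
      have hmul2 := cs.length_mul_le v (cs.wordProd (d ++ [i]))
      rw [← h3] at hmul2
      rw [List.length_append, List.length_singleton] at hπdi_le
      have hℓπdi : cs.length (cs.wordProd (d ++ [i])) = d.length + 1 := by omega
      have hred : cs.IsReduced (d ++ [i]) := by
        rw [CoxeterSystem.IsReduced, hℓπdi, List.length_append, List.length_singleton]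
      have hchain := chain'_of_reduced cs hred
      have hshape := shape hij d hmem hchain
      have hMv : M i j = 2 ∨ M i j = 3 ∨ M i j = 4 ∨ M i j = 6 := by
        rw [haM i j hij]; split_ifs <;> simp
      have hsym : M j i = M i j := M.symmetric j i
      have hbound : d.length + 1 ≤ M i j := by
        by_contra hgt
        push_neg at hgt
        have hni : ¬ cs.IsReduced (alternatingWord j i (d.length + 1)) :=
          cs.not_isReduced_alternatingWord j i (by omega) (by omega)
        apply hni
        have halt : alternatingWord j i (d.length + 1) =
            (alternatingWord i j d.length) ++ [i] := by
          rw [alternatingWord_succ, List.concat_eq_append]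
        rw [halt, ← hshape]
        exact hred
      have hvec := vec_nonneg cs hρ ha haM hij d.length hbound
      have hcalc : ρ (cs.wordProd d) (Finsupp.single i 1) =
          iot i j (vec (a i j) (a j i) d.length) := by
        conv_lhs => rw [hshape]
        exact rho_alt cs hρ ha hij d.length
      rw [hvd, map_mul, Module.End.mul_apply, hcalc, iot, map_add, map_smul, map_smul,
        Finsupp.add_apply, Finsupp.smul_apply, Finsupp.smul_apply, smul_eq_mul, smul_eq_mul]
      exact add_nonneg (mul_nonneg hvec.1 (IH _ hlv v i rfl hnvi b))
        (mul_nonneg hvec.2 (IH _ hlv v j rfl hnvj b))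

variable (hρ : ∀ s : B, ρ (cs.simple s) = coreflection a s)
  (ha : IsCartanMatrix a) (haM : IsCartanMatrixOf a M)

include hρ ha haM

theorem neg_of_descent (w : W) (i : B) (hd : cs.IsRightDescent w i) :
    ∀ b, ρ w (Finsupp.single i 1) b ≤ 0 := by
  have hdi := cs.isRightDescent_iff.mp hd
  have hnd : ¬cs.IsRightDescent (w * cs.simple i) i := by
    rw [cs.not_isRightDescent_iff, cs.simple_mul_simple_cancel_right]
    omega
  have hpos := pos_of_not_descent cs hρ ha haM (cs.length (w * cs.simple i)) _ i rfl hnd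
  have hsi : ρ (cs.simple i) (Finsupp.single i 1) = -(Finsupp.single i 1) := by
    rw [hρ i, coreflection_apply, pF_single, ha.1 i]
    ext c
    simp only [Finsupp.sub_apply, Finsupp.neg_apply, Finsupp.single_apply]
    split_ifs <;> ring
  intro b
  have hw : ρ w (Finsupp.single i 1) = -(ρ (w * cs.simple i) (Finsupp.single i 1)) := by
    conv_lhs => rw [← cs.simple_mul_simple_cancel_right (w := w) (i := i)]
    rw [map_mul, Module.End.mul_apply, hsi, map_neg]
  rw [hw, Finsupp.neg_apply, neg_nonpos]
  exact hpos b

theorem dichotomy (w : W) (i : B) :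
    (∀ b, 0 ≤ ρ w (Finsupp.single i 1) b) ∨ (∀ b, ρ w (Finsupp.single i 1) b ≤ 0) := by
  by_cases hd : cs.IsRightDescent w i
  · right; exact neg_of_descent cs hρ ha haM w i hd
  · left; exact pos_of_not_descent cs hρ ha haM (cs.length w) w i rfl hd

theorem eq_one_of_fixes (z : W)
    (h : ∀ c, ρ z (Finsupp.single c 1) = Finsupp.single c 1) : z = 1 := by
  by_contra hz
  obtain ⟨i, hdi⟩ := cs.exists_rightDescent_of_ne_one hz
  have hneg := neg_of_descent cs hρ ha haM z i hdi i
  rw [h i] at hneg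
  simp [Finsupp.single_apply] at hneg

omit ha haM in
theorem rho_conj (x : W) (s' : B) (v : B →₀ ℤ) :
    ρ (x * cs.simple s' * x⁻¹) v =
      v - pF a (ρ x⁻¹ v) s' • ρ x (Finsupp.single s' 1) := by
  rw [map_mul, map_mul, Module.End.mul_apply, Module.End.mul_apply, hρ s', coreflection_apply,
    map_sub]
  have h1 : ρ x (ρ x⁻¹ v) = v := by
    rw [← Module.End.mul_apply, ← map_mul, mul_inv_cancel, map_one, Module.End.one_apply]
  rw [h1]
  congr 1
  have h2 : Finsupp.single s' (pF a (ρ x⁻¹ v) s') =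
      pF a (ρ x⁻¹ v) s' • Finsupp.single s' 1 := by
    rw [Finsupp.smul_single', mul_one]
  rw [h2, map_smul]


theorem refl_mem_parabolic :
    ∀ (n : ℕ) (t x : W) (s' : B), cs.length t = n → t = x * cs.simple s' * x⁻¹ →
      t ∈ Subgroup.closure (cs.simple '' {b : B | ρ x (Finsupp.single s' 1) b ≠ 0}) := by
  intro n
  induction n using Nat.strong_induction_on with
  | _ n IH =>
    intro t x s' hn hconj
    obtain ⟨x', hconj', hpos', hset⟩ :
        ∃ x', t = x' * cs.simple s' * x'⁻¹ ∧ (∀ b, 0 ≤ ρ x' (Finsupp.single s' 1) b) ∧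
          {b : B | ρ x' (Finsupp.single s' 1) b ≠ 0} =
            {b : B | ρ x (Finsupp.single s' 1) b ≠ 0} := by
      rcases dichotomy cs hρ ha haM x s' with hpos | hneg
      · exact ⟨x, hconj, hpos, rfl⟩
      · refine ⟨x * cs.simple s', ?_, ?_, ?_⟩
        · rw [hconj, mul_inv_rev, cs.inv_simple]
          simp [mul_assoc, cs.simple_mul_simple_cancel_left]
        · intro b
          rw [map_mul, Module.End.mul_apply, hρ s', coreflection_apply, pF_single, ha.1 s',
            show (1 : ℤ) * 2 = 2 from by ring]
          have hval : Finsupp.single s' 1 - Finsupp.single s' 2 = -(Finsupp.single s' (1:ℤ)) := by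
            ext c; simp only [Finsupp.sub_apply, Finsupp.neg_apply, Finsupp.single_apply]
            split_ifs <;> ring
          rw [hval, map_neg, Finsupp.neg_apply]
          have := hneg b
          omega
        · ext b
          simp only [Set.mem_setOf_eq, map_mul, Module.End.mul_apply, hρ s', coreflection_apply,
            pF_single, ha.1 s', show (1 : ℤ) * 2 = 2 from by ring]
          have hval : Finsupp.single s' 1 - Finsupp.single s' 2 = -(Finsupp.single s' (1:ℤ)) := by
            ext c; simp only [Finsupp.sub_apply, Finsupp.neg_apply, Finsupp.single_apply]
            split_ifs <;> ring
          rw [hval, map_neg, Finsupp.neg_apply]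
          simp
    rw [← hset]
    clear hset hconj x
    -- notation
    set β : B →₀ ℤ := ρ x' (Finsupp.single s' 1) with hβdef
    set φ : (B →₀ ℤ) →ₗ[ℤ] ℤ :=
      (Finsupp.linearCombination ℤ (fun r => a r s')).comp (ρ x'⁻¹ : (B →₀ ℤ) →ₗ[ℤ] (B →₀ ℤ))
      with hφdef
    have hφeq : ∀ v, φ v = pF a (ρ x'⁻¹ v) s' := fun v => rfl
    have hρt : ∀ v, ρ t v = v - φ v • β := by
      intro v
      rw [hconj']
      exact rho_conj cs hρ x' s' v
    have hinvβ : ρ x'⁻¹ β = Finsupp.single s' 1 := by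
      rw [hβdef, ← Module.End.mul_apply, ← map_mul, inv_mul_cancel, map_one, Module.End.one_apply]
    have hφβ : φ β = 2 := by
      rw [hφeq, hinvβ, pF_single, ha.1 s']; ring
    have hβne : β ≠ 0 := by
      intro h0
      rw [h0, map_zero] at hinvβ
      have := congrArg (fun v : B →₀ ℤ => v s') hinvβ
      simp at this
    have ht1 : t ≠ 1 := by
      intro h1
      have hs : cs.simple s' = x'⁻¹ * t * x' := by rw [hconj']; group
      rw [h1, mul_one, inv_mul_cancel] at hs
      have hlen := cs.length_simple s'
      rw [hs, cs.length_one] at hlen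
      exact one_ne_zero hlen.symm
    obtain ⟨m, hdm⟩ := cs.exists_rightDescent_of_ne_one ht1
    have hneg := neg_of_descent cs hρ ha haM t m hdm
    have hβm : 1 ≤ β m ∧ 1 ≤ φ (Finsupp.single m 1) := by
      have h := hneg m
      rw [hρt, Finsupp.sub_apply, Finsupp.smul_apply, smul_eq_mul, Finsupp.single_apply,
        if_pos rfl] at h
      have hβm1' : 1 ≤ β m := by
        by_contra hc
        have hβ0 : β m = 0 := by have := hpos' m; omega
        rw [hβ0, mul_zero] at h
        omega
      refine ⟨hβm1', ?_⟩
      by_contra hc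
      push_neg at hc
      have hφ0 : φ (Finsupp.single m 1) ≤ 0 := by omega
      nlinarith [hβm1']
    have ht'conj : cs.simple m * t * cs.simple m =
        (cs.simple m * x') * cs.simple s' * (cs.simple m * x')⁻¹ := by
      rw [hconj', mul_inv_rev, cs.inv_simple]
      group
    by_cases hlt : cs.length (cs.simple m * t * cs.simple m) < n
    · have hmem := IH _ hlt (cs.simple m * t * cs.simple m) (cs.simple m * x') s' rfl ht'conj
      have hval : ρ (cs.simple m * x') (Finsupp.single s' 1) =
          β - Finsupp.single m (pF a β m) := by
        rw [map_mul, Module.End.mul_apply, ← hβdef, hρ m, coreflection_apply]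
      have hsub : {b : B | ρ (cs.simple m * x') (Finsupp.single s' 1) b ≠ 0} ⊆
          {b : B | β b ≠ 0} := by
        intro b hb
        rcases eq_or_ne b m with rfl | hbm
        · simp only [Set.mem_setOf_eq]
          omega
        · simp only [Set.mem_setOf_eq, hval, Finsupp.sub_apply, Finsupp.single_apply,
            if_neg (fun h : m = b => hbm h.symm), sub_zero] at hb ⊢
          exact hb
      have hmono := Subgroup.closure_mono (Set.image_mono (f := cs.simple) hsub)
      have hsm : cs.simple m ∈ Subgroup.closure (cs.simple '' {b : B | β b ≠ 0}) :=
        Subgroup.subset_closure ⟨m, by simp only [Set.mem_setOf_eq]; omega, rfl⟩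
      have hdecomp : t = cs.simple m * (cs.simple m * t * cs.simple m) * cs.simple m := by
        rw [show cs.simple m * (cs.simple m * t * cs.simple m) * cs.simple m =
          (cs.simple m * cs.simple m) * t * (cs.simple m * cs.simple m) from by group,
          cs.simple_mul_simple_self, one_mul, mul_one]
      rw [hdecomp]
      exact Subgroup.mul_mem _ (Subgroup.mul_mem _ hsm (hmono hmem)) hsm
    · push_neg at hlt
      have htinv : t⁻¹ = t := by
        rw [hconj', mul_inv_rev, mul_inv_rev, cs.inv_simple, inv_inv]
        group
      have hlts : cs.length (t * cs.simple m) + 1 = cs.length t := cs.isRightDescent_iff.mp hdm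
      have hlst : cs.length (cs.simple m * t) = cs.length (t * cs.simple m) := by
        conv_lhs => rw [← cs.length_inv, mul_inv_rev, cs.inv_simple, htinv]
      have hnd2 : ¬ cs.IsRightDescent (cs.simple m * t) m := by
        intro hd2
        have h2 := cs.isRightDescent_iff.mp hd2
        rw [mul_assoc] at h2
        rw [← mul_assoc] at h2
        omega
      have hpos2 := pos_of_not_descent cs hρ ha haM _ (cs.simple m * t) m rfl hnd2
      have hsmt : ∀ v, ρ (cs.simple m * t) v =
          (v - φ v • β) - Finsupp.single m (pF a (v - φ v • β) m) := by
        intro v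
        rw [map_mul, Module.End.mul_apply, hρt, hρ m, coreflection_apply]
      have hcoord : ∀ r, r ≠ m → β r = 0 := by
        intro r hrm
        have h := hpos2 r
        rw [hsmt, Finsupp.sub_apply, Finsupp.sub_apply, Finsupp.smul_apply, smul_eq_mul,
          Finsupp.single_apply, if_neg (fun hh : m = r => hrm hh.symm),
          Finsupp.single_apply, if_neg (fun hh : m = r => hrm hh.symm), sub_zero] at h
        by_contra hne
        have h1r : 1 ≤ β r := by have := hpos' r; omega
        nlinarith [hβm.2]
      have hβsingle : β = Finsupp.single m (β m) := by
        ext b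
        rcases eq_or_ne b m with rfl | hbm
        · simp [Finsupp.single_apply]
        · rw [hcoord b hbm, Finsupp.single_apply, if_neg (fun h : m = b => hbm h.symm)]
      have hβm1 : β m = 1 := by
        have hβsm : ρ x'⁻¹ β = β m • ρ x'⁻¹ (Finsupp.single m 1) := by
          conv_lhs => rw [hβsingle]
          rw [show Finsupp.single m (β m) = β m • Finsupp.single m 1 from by
            rw [Finsupp.smul_single', mul_one], map_smul]
        rw [hinvβ] at hβsm
        have hs'c := congrArg (fun v : B →₀ ℤ => v s') hβsm
        simp only [Finsupp.smul_apply, smul_eq_mul, Finsupp.single_apply, if_pos rfl] at hs'c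
        exact (Int.eq_one_of_mul_eq_one_right (by omega) hs'c.symm)
      have hβfinal : β = Finsupp.single m 1 := by rw [hβsingle, hβm1]
      have hφm2 : φ (Finsupp.single m 1) = 2 := by rw [← hβfinal, hφβ]
      have hzval : ∀ v : B →₀ ℤ, ρ (t * cs.simple m) v =
          v + (pF a v m - φ v) • Finsupp.single m 1 := by
        intro v
        rw [map_mul, Module.End.mul_apply, hρ m, coreflection_apply, hρt]
        have hsm1 : Finsupp.single m (pF a v m) = pF a v m • Finsupp.single m 1 := by
          rw [Finsupp.smul_single', mul_one]
        have hφlin : φ (v - Finsupp.single m (pF a v m)) = φ v - pF a v m * 2 := by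
          rw [hsm1, map_sub, map_smul, smul_eq_mul, hφm2]
        rw [hφlin, hβfinal, hsm1]
        module
      have hsval : ∀ v : B →₀ ℤ, ρ (cs.simple m * t) v =
          v - (pF a v m - φ v) • Finsupp.single m 1 := by
        intro v
        rw [hsmt]
        have hpf : pF a (v - φ v • β) m = pF a v m - φ v * 2 := by
          rw [pF_sub, pF_smul, hβfinal, pF_single, ha.1 m]
          ring
        rw [hpf, hβfinal,
          show Finsupp.single m (pF a v m - φ v * 2) =
            (pF a v m - φ v * 2) • Finsupp.single m 1 from by rw [Finsupp.smul_single', mul_one]]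
        module
      have hψ : ∀ c, c ≠ m → pF a (Finsupp.single c 1) m - φ (Finsupp.single c 1) = 0 := by
        intro c hcm
        have h1 := hzval (Finsupp.single c 1)
        have h2 := hsval (Finsupp.single c 1)
        have hge : 0 ≤ pF a (Finsupp.single c 1) m - φ (Finsupp.single c 1) := by
          rcases dichotomy cs hρ ha haM (t * cs.simple m) c with hp | hn
          · have := hp m
            rw [h1, Finsupp.add_apply, Finsupp.smul_apply, smul_eq_mul, Finsupp.single_apply,
              if_neg (fun hh : c = m => hcm hh), Finsupp.single_apply, if_pos rfl] at this
            omega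
          · exfalso
            have := hn c
            rw [h1, Finsupp.add_apply, Finsupp.smul_apply, smul_eq_mul, Finsupp.single_apply,
              if_pos rfl, Finsupp.single_apply, if_neg (fun hh : m = c => hcm hh.symm)] at this
            omega
        have hle : pF a (Finsupp.single c 1) m - φ (Finsupp.single c 1) ≤ 0 := by
          rcases dichotomy cs hρ ha haM (cs.simple m * t) c with hp | hn
          · have := hp m
            rw [h2, Finsupp.sub_apply, Finsupp.smul_apply, smul_eq_mul, Finsupp.single_apply,
              if_neg (fun hh : c = m => hcm hh), Finsupp.single_apply, if_pos rfl] at this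
            omega
          · exfalso
            have := hn c
            rw [h2, Finsupp.sub_apply, Finsupp.smul_apply, smul_eq_mul, Finsupp.single_apply,
              if_pos rfl, Finsupp.single_apply, if_neg (fun hh : m = c => hcm hh.symm)] at this
            omega
        omega
      have hfixm : pF a (Finsupp.single m 1) m - φ (Finsupp.single m 1) = 0 := by
        rw [pF_single, ha.1 m, hφm2]; ring
      have hfix : ∀ c, ρ (t * cs.simple m) (Finsupp.single c 1) = Finsupp.single c 1 := by
        intro c
        rcases eq_or_ne c m with rfl | hcm
        · rw [hzval, hfixm]
          simp
        · rw [hzval, hψ c hcm]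
          simp
      have hz1 : t * cs.simple m = 1 := eq_one_of_fixes cs hρ ha haM _ hfix
      have htm : t = cs.simple m := by
        have h := eq_inv_of_mul_eq_one_right hz1
        rw [htinv] at h
        exact h.symm
      rw [htm]
      exact Subgroup.subset_closure ⟨m, by simp only [Set.mem_setOf_eq]; omega, rfl⟩

end Rep

end CRAux

/-- Let `W` be the Weyl group of the crystallographic Cartan matrix `a`
(with its reflection representation `ρ` on the coroot lattice), `I ⊆ S`, and `u < v` in
`W^I` with `ℓ(v) = ℓ(u) + 1`, so `v = u·s_β` for a (positive) root `β` with positive coroot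
vector `β^∨`.  Then `β ∉ R_I` (equivalently, the reflection `s_β` does not lie in `W_I`),
and consequently there is a simple root `α ∈ Δ \ Δ_I` with `ω_α(β^∨) ≠ 0`, i.e. the
coefficient of `β^∨` at a simple coroot outside `I` is nonzero. -/
theorem covering_root_not_in_parabolic
    [DecidableEq B] (a : B → B → ℤ) (ha : IsCartanMatrix a) (haM : IsCartanMatrixOf a M)
    (ρ : W →* Module.End ℤ (B →₀ ℤ)) (hρ : ∀ s : B, ρ (cs.simple s) = coreflection a s)
    (I : Set B) (u v : W) (hu : IsMinRep cs I u) (hv : IsMinRep cs I v)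
    (huv : BruhatLe cs u v) (hlen : cs.length v = cs.length u + 1)
    (t : W) (hvut : v = u * t) (β : B →₀ ℤ) (hβpos : ∀ b : B, 0 ≤ β b)
    (hβ : ∃ (x : W) (s : B), t = x * cs.simple s * x⁻¹ ∧
      β = ρ x (Finsupp.single s 1)) :
    t ∉ parabolicSubgroup cs I ∧ ∃ α : B, α ∉ I ∧ β α ≠ 0 := by
  obtain ⟨x, s, hconj, hβval⟩ := hβ
  have hpart1 : t ∉ parabolicSubgroup cs I := by
    intro htI
    have hmem : v⁻¹ * u ∈ parabolicSubgroup cs I := by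
      rw [hvut]
      have hca : (u * t)⁻¹ * u = t⁻¹ := by group
      rw [hca]
      exact inv_mem htI
    have := hv u hmem
    omega
  refine ⟨hpart1, ?_⟩
  by_contra hno
  push_neg at hno
  have hmem := CRAux.refl_mem_parabolic cs hρ ha haM (cs.length t) t x s rfl hconj
  have hsub : {b : B | ρ x (Finsupp.single s 1) b ≠ 0} ⊆ I := by
    intro b hb
    by_contra hbI
    apply hb
    rw [← hβval]
    exact hno b hbI
  have ht2 : t ∈ parabolicSubgroup cs I :=
    Subgroup.closure_mono (Set.image_mono hsub) hmem
  exact hpart1 ht2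
end
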